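/- arXiv:math/0602665 — 13 statements merged into one kernel-verified Lean document; each statement's English description precedes it below -/
import Mathlib

section
/- Let N be a module over a commutative ring R, let b ⊆ R be an ideal generated by a single element f, and let L ⊆ N be a submodule with N/L isomorphic to R/q for a prime ideal q ⊆ R. Then bN ∩ L = bN when f ∈ q, and bN ∩ L = bL when f ∉ q. -/
open Pointwise

/-- Let `N` be a module over a commutative ring `R`, `b = (f)` a principal ideal,
and `L ⊆ N` a submodule with `N/L ≅ R/q` for a prime ideal `q`. Then
`bN ∩ L = bN` when `f ∈ q`, and `bN ∩ L = bL` when `f ∉ q`. -/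
theorem smul_inter_submodule (R : Type*) [CommRing R] (N : Type*) [AddCommGroup N]
    [Module R N] (f : R) (L : Submodule R N) (q : Ideal R) [q.IsPrime]
    (e : (N ⧸ L) ≃ₗ[R] (R ⧸ q)) :
    (f ∈ q → (Ideal.span {f} • (⊤ : Submodule R N)) ⊓ L =
        Ideal.span {f} • (⊤ : Submodule R N)) ∧
    (f ∉ q → (Ideal.span {f} • (⊤ : Submodule R N)) ⊓ L =
        Ideal.span {f} • L) := by
  have hmem : ∀ (M : Submodule R N) (x : N),
      x ∈ Ideal.span {f} • M ↔ ∃ m ∈ M, f • m = x := by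
    intro M x
    rw [Submodule.ideal_span_singleton_smul]
    exact Set.mem_smul_set.trans (by simp [eq_comm])
  constructor
  · intro hf
    refine inf_eq_left.mpr ?_
    intro x hx
    obtain ⟨n, -, rfl⟩ := (hmem ⊤ x).mp hx
    -- show f • n ∈ L
    rw [← Submodule.Quotient.mk_eq_zero, Submodule.Quotient.mk_smul]
    have : e (f • Submodule.Quotient.mk n) = 0 := by
      rw [map_smul]
      obtain ⟨r, hr⟩ := Ideal.Quotient.mk_surjective (I := q) (e (Submodule.Quotient.mk n))
      rw [← hr, Algebra.smul_def, Ideal.Quotient.algebraMap_eq, ← map_mul, Ideal.Quotient.eq_zero_iff_mem]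
      simpa using q.mul_mem_right r hf
    simpa using (map_eq_zero_iff e e.injective).mp this
  · intro hf
    refine le_antisymm ?_ (le_inf (Submodule.smul_mono le_rfl le_top) ?_)
    · rintro x ⟨hx1, hx2⟩
      obtain ⟨n, -, rfl⟩ := (hmem ⊤ x).mp hx1
      have hn : n ∈ L := by
        rw [← Submodule.Quotient.mk_eq_zero, ← map_eq_zero_iff e e.injective]
        obtain ⟨r, hr⟩ := Ideal.Quotient.mk_surjective (I := q) (e (Submodule.Quotient.mk n))
        have h0 : Ideal.Quotient.mk q (f * r) = 0 := by
          rw [map_mul, hr, ← Ideal.Quotient.algebraMap_eq, ← Algebra.smul_def, ← map_smul, ← Submodule.Quotient.mk_smul,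
            map_eq_zero_iff e e.injective, Submodule.Quotient.mk_eq_zero]
          exact hx2
        rw [Ideal.Quotient.eq_zero_iff_mem] at h0
        rw [← hr, Ideal.Quotient.eq_zero_iff_mem]
        exact ((Ideal.IsPrime.mem_or_mem ‹q.IsPrime› h0).resolve_left hf)
      exact (hmem L _).mpr ⟨n, hn, rfl⟩
    · rw [Submodule.ideal_span_singleton_smul]
      exact Submodule.smul_le_self_of_tower f L
end

section
/- Let R be a commutative ring, N an R-module, b = (f) a principal ideal of R, and L ⊆ N a submodule with N/L ≅ R/q for a prime ideal q. Then N/bN is finite if and only if both L/bL and (N/L)/b(N/L) are finite. -/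
open Pointwise in
private lemma mem_span_smul_top' {R M : Type*} [CommRing R] [AddCommGroup M] [Module R M]
    (f : R) (x : M) :
    x ∈ Ideal.span {f} • (⊤ : Submodule R M) ↔ ∃ n, f • n = x := by
  rw [Submodule.ideal_span_singleton_smul]
  constructor
  · rintro ⟨m, -, rfl⟩; exact ⟨m, rfl⟩
  · rintro ⟨n, rfl⟩; exact ⟨n, trivial, rfl⟩

private lemma finite_of_submodule_quot {R M : Type*} [Ring R] [AddCommGroup M] [Module R M]
    (P : Submodule R M) (h1 : Finite P) (h2 : Finite (M ⧸ P)) : Finite M := by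
  have h1' : Finite P.toAddSubgroup := h1
  have h2' : Finite (M ⧸ P.toAddSubgroup) := h2
  exact Finite.of_equiv _
    (AddSubgroup.addGroupEquivQuotientProdAddSubgroup (s := P.toAddSubgroup)).symm

private lemma map_mkQ_self {R M : Type*} [Ring R] [AddCommGroup M] [Module R M]
    (P : Submodule R M) : Submodule.map P.mkQ P = ⊥ := by
  rw [eq_bot_iff]
  rintro x ⟨y, hy, rfl⟩
  simpa using (Submodule.Quotient.mk_eq_zero P).mpr hy

/-- Let `R` be a commutative ring, `N` an `R`-module, `b = (f)` a principal ideal,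
and `L ⊆ N` a submodule with `N/L ≅ R/q` for a prime ideal `q`. Then `N/bN` is
finite iff both `L/bL` and `(N/L)/b(N/L)` are finite. -/
theorem finite_quotient_iff (R : Type*) [CommRing R] (N : Type*) [AddCommGroup N]
    [Module R N] (f : R) (L : Submodule R N) (q : Ideal R) [q.IsPrime]
    (e : (N ⧸ L) ≃ₗ[R] (R ⧸ q)) :
    Finite (N ⧸ (Ideal.span {f} • (⊤ : Submodule R N))) ↔
      (Finite (L ⧸ (Ideal.span {f} • (⊤ : Submodule R L))) ∧
        Finite ((N ⧸ L) ⧸ (Ideal.span {f} • (⊤ : Submodule R (N ⧸ L))))) := by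
  set bN : Submodule R N := Ideal.span {f} • ⊤ with hbN
  set bL : Submodule R L := Ideal.span {f} • ⊤ with hbL
  set bQ : Submodule R (N ⧸ L) := Ideal.span {f} • ⊤ with hbQ
  -- bQ is the image of bN
  have hmap : Submodule.map L.mkQ bN = bQ := by
    rw [hbN, hbQ, Submodule.map_smul'', Submodule.map_top, Submodule.range_mkQ]
  -- equivalence (N⧸L)⧸bQ ≃ N⧸(L ⊔ bN)
  have hmap2 : Submodule.map L.mkQ (L ⊔ bN) = bQ := by
    rw [Submodule.map_sup, map_mkQ_self, bot_sup_eq, hmap]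
  let E3 : ((N ⧸ L) ⧸ bQ) ≃ₗ[R] N ⧸ (L ⊔ bN) :=
    (Submodule.quotEquivOfEq _ _ hmap2.symm).trans
      (Submodule.quotientQuotientEquivQuotient L (L ⊔ bN) le_sup_left)
  -- surjection N⧸bN → N⧸(L⊔bN)
  have hsurj : Function.Surjective (Submodule.mapQ bN (L ⊔ bN) LinearMap.id le_sup_right) := by
    intro x
    obtain ⟨n, rfl⟩ := Submodule.mkQ_surjective _ x
    exact ⟨Submodule.Quotient.mk n, rfl⟩
  -- the natural map g : L⧸bL → N⧸bN
  have hle : bL ≤ Submodule.comap L.subtype bN := by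
    intro x hx
    obtain ⟨m, rfl⟩ := (mem_span_smul_top' f x).mp hx
    exact (mem_span_smul_top' f _).mpr ⟨(m : N), rfl⟩
  set g : (L ⧸ bL) →ₗ[R] N ⧸ bN := Submodule.mapQ bL bN L.subtype hle with hg
  -- smul on R⧸q
  have hsmul : ∀ y : R ⧸ q, f • y = Ideal.Quotient.mk q f * y := by
    intro y
    obtain ⟨r, rfl⟩ := Ideal.Quotient.mk_surjective y
    rw [← map_mul]
    rfl
  constructor
  · intro hfin
    have hfin2 : Finite (N ⧸ (L ⊔ bN)) := Finite.of_surjective _ hsurj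
    have hfinQ : Finite ((N ⧸ L) ⧸ bQ) := Finite.of_equiv _ E3.symm.toEquiv
    refine ⟨?_, hfinQ⟩
    by_cases hfq : f ∈ q
    · -- f ∈ q : bN ≤ L, N⧸L finite, finite kernel argument
      have hbNL : bN ≤ L := by
        intro x hx
        obtain ⟨n, rfl⟩ := (mem_span_smul_top' f x).mp hx
        rw [← Submodule.Quotient.mk_eq_zero L]
        have h0 : e (Submodule.Quotient.mk (f • n)) = 0 := by
          rw [Submodule.Quotient.mk_smul, map_smul, hsmul,
            (Ideal.Quotient.eq_zero_iff_mem).mpr hfq, zero_mul]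
        exact e.map_eq_zero_iff.mp h0
      have hNL : Finite (N ⧸ L) :=
        Finite.of_surjective (Submodule.mapQ bN L LinearMap.id hbNL) (by
          intro x
          obtain ⟨n, rfl⟩ := Submodule.mkQ_surjective _ x
          exact ⟨Submodule.Quotient.mk n, rfl⟩)
      -- kernel of g is finite: covered by image of a map from N⧸L
      have hfl : ∀ n : N, f • n ∈ L := fun n => hbNL ((mem_span_smul_top' f _).mpr ⟨n, rfl⟩)
      let ψ : N →ₗ[R] L ⧸ bL :=
        bL.mkQ ∘ₗ ((f • (LinearMap.id : N →ₗ[R] N)).codRestrict L hfl)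
      have hψL : L ≤ LinearMap.ker ψ := by
        intro l hl
        simp only [ψ, LinearMap.mem_ker, LinearMap.comp_apply, Submodule.mkQ_apply]
        rw [Submodule.Quotient.mk_eq_zero]
        exact (mem_span_smul_top' f _).mpr ⟨⟨l, hl⟩, rfl⟩
      let F : (N ⧸ L) →ₗ[R] L ⧸ bL := Submodule.liftQ L ψ hψL
      have hker_sub : (LinearMap.ker g : Set (L ⧸ bL)) ⊆ Set.range F := by
        rintro x hx
        obtain ⟨l, rfl⟩ := Submodule.mkQ_surjective _ x
        have : (l : N) ∈ bN := by
          have := (LinearMap.mem_ker).mp hx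
          rw [hg, Submodule.mkQ_apply, Submodule.mapQ_apply] at this
          rwa [Submodule.Quotient.mk_eq_zero] at this
        obtain ⟨n, hn⟩ := (mem_span_smul_top' f _).mp this
        refine ⟨Submodule.Quotient.mk n, ?_⟩
        show ψ n = Submodule.Quotient.mk l
        simp only [ψ, LinearMap.comp_apply, Submodule.mkQ_apply]
        congr 1
        exact Subtype.ext hn
      have hkerfin : Finite (LinearMap.ker g) := by
        have : (Set.range F).Finite := Set.finite_range F
        exact (this.subset hker_sub).to_subtype
      have hrangefin : Finite (LinearMap.range g) := Subtype.finite
      have hquotfin : Finite ((L ⧸ bL) ⧸ LinearMap.ker g) :=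
        Finite.of_equiv _ g.quotKerEquivRange.symm.toEquiv
      exact finite_of_submodule_quot (LinearMap.ker g) hkerfin hquotfin
    · -- f ∉ q : g is injective
      have hinj : Function.Injective g := by
        rw [← LinearMap.ker_eq_bot, eq_bot_iff]
        intro x hx
        obtain ⟨l, rfl⟩ := Submodule.mkQ_surjective _ x
        have hlbN : (l : N) ∈ bN := by
          have := (LinearMap.mem_ker).mp hx
          rw [hg, Submodule.mkQ_apply, Submodule.mapQ_apply] at this
          rwa [Submodule.Quotient.mk_eq_zero] at this
        obtain ⟨n, hn⟩ := (mem_span_smul_top' f _).mp hlbN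
        have hnL : n ∈ L := by
          have h0 : f • e (Submodule.Quotient.mk n) = 0 := by
            rw [← map_smul, ← Submodule.Quotient.mk_smul, hn]
            exact congrArg e ((Submodule.Quotient.mk_eq_zero L).mpr l.2) |>.trans (map_zero e)
          rw [hsmul] at h0
          have hf0 : (Ideal.Quotient.mk q f) ≠ 0 := by
            rwa [Ne, Ideal.Quotient.eq_zero_iff_mem]
          have := mul_eq_zero.mp h0
          have hy0 : e (Submodule.Quotient.mk n) = 0 := this.resolve_left hf0
          exact (Submodule.Quotient.mk_eq_zero L).mp (e.map_eq_zero_iff.mp hy0)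
        simp only [Submodule.mem_bot, Submodule.mkQ_apply, Submodule.Quotient.mk_eq_zero]
        exact (mem_span_smul_top' f _).mpr ⟨⟨n, hnL⟩, Subtype.ext hn⟩
      exact Finite.of_injective g hinj
  · rintro ⟨h1, h2⟩
    -- P := image of L in N⧸bN is finite
    set σ : L →ₗ[R] N ⧸ bN := bN.mkQ ∘ₗ L.subtype with hσ
    have hσker : bL ≤ LinearMap.ker σ := by
      intro x hx
      obtain ⟨m, rfl⟩ := (mem_span_smul_top' f x).mp hx
      simp only [hσ, LinearMap.mem_ker, LinearMap.comp_apply, Submodule.mkQ_apply,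
        Submodule.coe_subtype]
      rw [Submodule.Quotient.mk_eq_zero]
      exact (mem_span_smul_top' f _).mpr ⟨(m : N), rfl⟩
    set σ' : (L ⧸ bL) →ₗ[R] N ⧸ bN := Submodule.liftQ bL σ hσker with hσ'
    have hrange : LinearMap.range σ' = Submodule.map bN.mkQ L := by
      rw [hσ', Submodule.range_liftQ, hσ, LinearMap.range_comp, Submodule.range_subtype]
    have hPfin : Finite (Submodule.map bN.mkQ L) := by
      rw [← hrange]
      exact Finite.of_surjective σ'.rangeRestrict σ'.surjective_rangeRestrict
    have hmap3 : Submodule.map bN.mkQ (bN ⊔ L) = Submodule.map bN.mkQ L := by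
      rw [Submodule.map_sup, map_mkQ_self, bot_sup_eq]
    have hQfin : Finite ((N ⧸ bN) ⧸ Submodule.map bN.mkQ L) := by
      have E4 : ((N ⧸ bN) ⧸ Submodule.map bN.mkQ L) ≃ₗ[R] N ⧸ (bN ⊔ L) :=
        (Submodule.quotEquivOfEq _ _ hmap3.symm).trans
          (Submodule.quotientQuotientEquivQuotient bN (bN ⊔ L) le_sup_left)
      have E5 : (N ⧸ (bN ⊔ L)) ≃ₗ[R] N ⧸ (L ⊔ bN) := Submodule.quotEquivOfEq _ _ (sup_comm _ _)
      exact Finite.of_equiv _ (E3.trans (E5.symm.trans E4.symm)).toEquiv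
    exact finite_of_submodule_quot (Submodule.map bN.mkQ L) hPfin hQfin
end

section
/- Let R be a commutative ring, N an R-module, b = (f) a principal ideal, and L ⊆ N a submodule with N/L ≅ R/q for a prime ideal q containing f. If N/bN is finite, then there is a surjective R-module homomorphism from N/L onto bN/bL; in particular bN/bL is finite. -/
open Pointwise


/-- Let `R` be a commutative ring, `N` an `R`-module, `b = (f)` a principal
ideal, and `L ⊆ N` a submodule with `N/L ≅ R/q` for a prime ideal `q` containing
`f`. If `N/bN` is finite, then there is a surjective `R`-module homomorphism
from `N/L` onto `bN/bL`; in particular `bN/bL` is finite. -/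
theorem surjective_onto_bN_mod_bL (R : Type*) [CommRing R] (N : Type*)
    [AddCommGroup N] [Module R N] (f : R) (L : Submodule R N) (q : Ideal R)
    [q.IsPrime] (e : (N ⧸ L) ≃ₗ[R] (R ⧸ q)) (hfq : f ∈ q)
    (hfin : Finite (N ⧸ (Ideal.span {f} • (⊤ : Submodule R N)))) :
    (∃ φ : (N ⧸ L) →ₗ[R]
        (↥(Ideal.span {f} • (⊤ : Submodule R N)) ⧸
          ((Ideal.span {f} • L).comap (Ideal.span {f} • (⊤ : Submodule R N)).subtype)),
        Function.Surjective φ) ∧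
      Finite (↥(Ideal.span {f} • (⊤ : Submodule R N)) ⧸
        ((Ideal.span {f} • L).comap (Ideal.span {f} • (⊤ : Submodule R N)).subtype)) := by
  set b : Submodule R N := Ideal.span {f} • (⊤ : Submodule R N) with hb
  set K : Submodule R b := (Ideal.span {f} • L).comap b.subtype with hK
  have hfspan : f ∈ Ideal.span {f} := Ideal.mem_span_singleton_self f
  have hmem : ∀ x : N, f • x ∈ b := fun x =>
    Submodule.smul_mem_smul hfspan trivial
  -- the map N → b ⧸ K, x ↦ f • x
  let ψ : N →ₗ[R] b ⧸ K :=
    K.mkQ.comp ((LinearMap.lsmul R N f).codRestrict b hmem)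
  have hker : L ≤ LinearMap.ker ψ := by
    intro x hx
    simp only [ψ, LinearMap.mem_ker, LinearMap.comp_apply, Submodule.mkQ_apply,
      Submodule.Quotient.mk_eq_zero]
    exact Submodule.smul_mem_smul hfspan hx
  let φ : (N ⧸ L) →ₗ[R] b ⧸ K := L.liftQ ψ hker
  have hsurj : Function.Surjective φ := by
    intro y
    obtain ⟨⟨z, hz⟩, rfl⟩ := K.mkQ_surjective y
    have hz' : z ∈ f • (⊤ : Submodule R N) := by
      rwa [hb, Submodule.ideal_span_singleton_smul] at hz
    have hz'' : z ∈ f • ((⊤ : Submodule R N) : Set N) := by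
      rw [← Submodule.coe_pointwise_smul]; exact hz'
    obtain ⟨x, -, hx⟩ := Set.mem_smul_set.mp hz''
    refine ⟨L.mkQ x, ?_⟩
    show ψ x = _
    simp only [ψ, LinearMap.comp_apply, Submodule.mkQ_apply]
    congr 1
    exact Subtype.ext hx
  refine ⟨⟨φ, hsurj⟩, ?_⟩
  -- b ≤ L since f kills N/L ≅ R/q
  have hbL : b ≤ L := by
    rw [hb]
    refine Submodule.smul_le.mpr fun r hr x _ => ?_
    obtain ⟨c, rfl⟩ := Ideal.mem_span_singleton'.mp hr
    have hfx : f • x ∈ L := by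
      have h1 : e (Submodule.Quotient.mk (f • x)) = 0 := by
        rw [Submodule.Quotient.mk_smul, map_smul]
        obtain ⟨r', hr'⟩ := Submodule.Quotient.mk_surjective q (e (Submodule.Quotient.mk x))
        rw [← hr', ← Submodule.Quotient.mk_smul, Submodule.Quotient.mk_eq_zero]
        simpa [smul_eq_mul] using q.mul_mem_right r' hfq
      have h2 : Submodule.Quotient.mk (f • x) = (0 : N ⧸ L) := e.map_eq_zero_iff.mp h1
      rwa [Submodule.Quotient.mk_eq_zero] at h2
    have : (c * f) • x = c • (f • x) := by rw [mul_smul]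
    rw [this]
    exact L.smul_mem c hfx
  -- N ⧸ L is a quotient of N ⧸ b, hence finite
  have hNL : Finite (N ⧸ L) := by
    have : Function.Surjective (b.liftQ L.mkQ (by rwa [Submodule.ker_mkQ])) := by
      intro y
      obtain ⟨x, rfl⟩ := L.mkQ_surjective y
      exact ⟨b.mkQ x, rfl⟩
    exact Finite.of_surjective _ this
  exact Finite.of_surjective φ hsurj
end

section
/- Let M be a Noetherian module over a commutative Noetherian ring R of finite cardinality type, with a prime filtration 0 = M_0 ⊆ M_1 ⊆ ... ⊆ M_n = M where each M_k/M_{k-1} ≅ R/q_k for prime ideals q_k. For f ∈ R, if (R/p)/f(R/p) is finite for every associated prime p of M, then M/fM is finite. -/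
open Submodule

/-- If a submodule and the corresponding quotient are finite, the module is finite. -/
private lemma fin_ext' {R M : Type*} [CommRing R] [AddCommGroup M] [Module R M]
    (N : Submodule R M) (h1 : Finite ↥N) (h2 : Finite (M ⧸ N)) : Finite M :=
  @Finite.of_addSubgroup_quotient M _ N.toAddSubgroup h1 h2

/-- The key extension step: if `N ⧸ I•N` and `(P⧸N) ⧸ I•(P⧸N)` are finite then
`P ⧸ I•P` is finite. -/
private lemma step' {R P : Type*} [CommRing R] [AddCommGroup P] [Module R P]
    (I : Ideal R) (N : Submodule R P)
    (h1 : Finite (↥N ⧸ (I • ⊤ : Submodule R ↥N)))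
    (h2 : Finite ((P ⧸ N) ⧸ (I • ⊤ : Submodule R (P ⧸ N)))) :
    Finite (P ⧸ (I • ⊤ : Submodule R P)) := by
  set S : Submodule R P := I • ⊤ with hSdef
  set T : Submodule R (P ⧸ N) := I • ⊤ with hTdef
  have hS : S ≤ LinearMap.ker (T.mkQ ∘ₗ N.mkQ) := by
    refine Submodule.smul_le.2 fun r hr x _ => ?_
    simp only [LinearMap.mem_ker, LinearMap.comp_apply, map_smul]
    exact (Submodule.Quotient.mk_eq_zero T).2 (Submodule.smul_mem_smul hr mem_top)
  set h : (P ⧸ S) →ₗ[R] (P ⧸ N) ⧸ T := S.liftQ _ hS with hhdef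
  have hgN : (I • ⊤ : Submodule R ↥N) ≤ LinearMap.ker (S.mkQ ∘ₗ N.subtype) := by
    refine Submodule.smul_le.2 fun r hr x _ => ?_
    simp only [LinearMap.mem_ker, LinearMap.comp_apply, map_smul]
    exact (Submodule.Quotient.mk_eq_zero S).2 (Submodule.smul_mem_smul hr mem_top)
  set g : (↥N ⧸ (I • ⊤ : Submodule R ↥N)) →ₗ[R] P ⧸ S :=
    Submodule.liftQ _ _ hgN with hgdef
  have hker : LinearMap.ker h ≤ LinearMap.range g := by
    rintro x hx
    obtain ⟨p, rfl⟩ := S.mkQ_surjective x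
    have hmem : N.mkQ p ∈ T :=
      (Submodule.Quotient.mk_eq_zero T).1 (LinearMap.mem_ker.1 hx)
    have hTmap : T = Submodule.map N.mkQ S := by
      rw [hSdef, hTdef, Submodule.map_smul'', Submodule.map_top, N.range_mkQ]
    rw [hTmap] at hmem
    obtain ⟨s, hs, hsp⟩ := hmem
    have hpn : p - s ∈ N := by
      have : N.mkQ (p - s) = 0 := by rw [map_sub, hsp, sub_self]
      exact (Submodule.Quotient.mk_eq_zero N).1 this
    refine ⟨Submodule.Quotient.mk (⟨p - s, hpn⟩ : ↥N), ?_⟩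
    have : g (Submodule.Quotient.mk (⟨p - s, hpn⟩ : ↥N)) = S.mkQ (p - s) := by
      rw [hgdef, Submodule.liftQ_apply]; rfl
    rw [this]
    refine (Submodule.Quotient.eq S).2 ?_
    simpa using S.neg_mem hs
  have hfinrange : Finite (LinearMap.range g) :=
    Finite.of_surjective g.rangeRestrict (LinearMap.surjective_rangeRestrict g)
  have hfinker : Finite (LinearMap.ker h) :=
    Finite.of_injective (Submodule.inclusion hker) (Submodule.inclusion_injective hker)
  have hfinrangeh : Finite (LinearMap.range h) := Subtype.finite
  have hfinquot : Finite ((P ⧸ S) ⧸ LinearMap.ker h) :=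
    Finite.of_equiv _ h.quotKerEquivRange.symm.toEquiv
  exact fin_ext' (LinearMap.ker h) hfinker hfinquot

/-- Let `M` be a Noetherian module over a commutative Noetherian ring `R`, with a
prime filtration `0 = M₀ ⊆ M₁ ⊆ … ⊆ Mₙ = M`, `M_k/M_{k-1} ≅ R/q_k` for prime
ideals `q_k`, each containing some associated prime of `M`. If for `f ∈ R` the
quotient `(R/p)/f(R/p) ≅ R/((f)+p)` is finite for every associated prime `p` of
`M`, then `M/fM` is finite. -/
theorem finite_of_finite_on_associated_primes
    (R : Type*) [CommRing R] [IsNoetherianRing R]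
    (M : Type*) [AddCommGroup M] [Module R M] [Module.Finite R M]
    (n : ℕ) (Mf : ℕ → Submodule R M) (q : ℕ → Ideal R)
    (h0 : Mf 0 = ⊥) (hn : Mf n = ⊤)
    (hmono : ∀ k < n, Mf k ≤ Mf (k + 1))
    (hprime : ∀ k < n, (q k).IsPrime)
    (hiso : ∀ k (hk : k < n),
      Nonempty ((↥(Mf (k + 1)) ⧸ ((Mf k).comap (Mf (k + 1)).subtype)) ≃ₗ[R] (R ⧸ q k)))
    (hasc : ∀ k < n, ∃ p ∈ associatedPrimes R M, p ≤ q k)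
    (f : R)
    (hfin : ∀ p ∈ associatedPrimes R M, Finite (R ⧸ (Ideal.span {f} ⊔ p))) :
    Finite (M ⧸ (Ideal.span {f} • (⊤ : Submodule R M))) := by
  set I : Ideal R := Ideal.span {f} with hI
  have key : ∀ k, k ≤ n → Finite (↥(Mf k) ⧸ (I • ⊤ : Submodule R ↥(Mf k))) := by
    intro k
    induction k with
    | zero =>
      intro _
      have hsub : Subsingleton ↥(Mf 0) := by rw [h0]; infer_instance
      have : Subsingleton (↥(Mf 0) ⧸ (I • ⊤ : Submodule R ↥(Mf 0))) :=
        (Submodule.mkQ_surjective _).subsingleton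
      exact Finite.of_subsingleton
    | succ k ih =>
      intro hk
      have hk' : k < n := hk
      have ihf := ih hk'.le
      set P : Submodule R M := Mf (k + 1) with hP
      set N : Submodule R ↥P := (Mf k).comap P.subtype with hN
      have e : ↥(Mf k) ≃ₗ[R] ↥N := (Submodule.comapSubtypeEquivOfLe (hmono k hk')).symm
      have h1 : Finite (↥N ⧸ (I • ⊤ : Submodule R ↥N)) := by
        have heq : Submodule.map (e : ↥(Mf k) →ₗ[R] ↥N) (I • ⊤ : Submodule R ↥(Mf k))
            = (I • ⊤ : Submodule R ↥N) := by
          rw [Submodule.map_smul'', Submodule.map_top, LinearEquiv.range]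
        exact Finite.of_equiv _ (Submodule.Quotient.equiv _ _ e heq).toEquiv
      obtain ⟨eqv⟩ := hiso k hk'
      have h2R : Finite ((R ⧸ q k) ⧸ (I • ⊤ : Submodule R (R ⧸ q k))) := by
        obtain ⟨p, hp, hpq⟩ := hasc k hk'
        have hfp := hfin p hp
        have hle : I ⊔ p ≤ I ⊔ q k := sup_le_sup_left hpq _
        have hfq : Finite (R ⧸ (I ⊔ q k)) :=
          Finite.of_surjective (Ideal.Quotient.factor hle)
            (Ideal.Quotient.factor_surjective hle)
        set T : Submodule R (R ⧸ q k) := I • ⊤ with hT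
        have hker : (I ⊔ q k : Ideal R) ≤ LinearMap.ker (T.mkQ ∘ₗ (q k).mkQ) := by
          refine sup_le ?_ ?_
          · intro r hr
            simp only [LinearMap.mem_ker, LinearMap.comp_apply]
            have hmm : r • ((q k).mkQ 1) ∈ T := Submodule.smul_mem_smul hr mem_top
            have hmem2 : (q k).mkQ r ∈ T := by
              have hr1 : (q k).mkQ r = r • (q k).mkQ 1 := by
                rw [← map_smul, smul_eq_mul, mul_one]
              rw [hr1]; exact hmm
            exact (Submodule.Quotient.mk_eq_zero T).2 hmem2
          · intro r hr
            simp only [LinearMap.mem_ker, LinearMap.comp_apply]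
            have hz : (q k).mkQ r = 0 := (Submodule.Quotient.mk_eq_zero (q k)).2 hr
            rw [hz, map_zero]
        refine Finite.of_surjective (Submodule.liftQ _ _ hker) ?_
        intro y
        obtain ⟨z, rfl⟩ := T.mkQ_surjective y
        obtain ⟨r, rfl⟩ := (q k).mkQ_surjective z
        exact ⟨Submodule.Quotient.mk r, rfl⟩
      have h2 : Finite ((↥P ⧸ N) ⧸ (I • ⊤ : Submodule R (↥P ⧸ N))) := by
        have heq : Submodule.map (eqv.symm : (R ⧸ q k) →ₗ[R] (↥P ⧸ N))
            (I • ⊤ : Submodule R (R ⧸ q k)) = (I • ⊤ : Submodule R (↥P ⧸ N)) := by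
          rw [Submodule.map_smul'', Submodule.map_top,
            LinearEquiv.range]
        exact Finite.of_equiv _ (Submodule.Quotient.equiv _ _ eqv.symm heq).toEquiv
      exact step' I N h1 h2
  have hfinn := key n le_rfl
  have e : ↥(Mf n) ≃ₗ[R] M := (LinearEquiv.ofEq _ _ hn).trans Submodule.topEquiv
  have heq : Submodule.map (e : ↥(Mf n) →ₗ[R] M) (I • ⊤ : Submodule R ↥(Mf n))
      = (I • ⊤ : Submodule R M) := by
    rw [Submodule.map_smul'', Submodule.map_top, LinearEquiv.range]
  exact Finite.of_equiv _ (Submodule.Quotient.equiv _ _ e heq).toEquiv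
end

section
/- Let M be a finitely generated module over R_d = ℤ[u_1^{±1},...,u_d^{±1}] and f ∈ R_d. If M/fM is finite, then for every associated prime p of M the quotient (R_d/p)/f·(R_d/p) is finite. -/
open Submodule

private lemma aux_finite_of_sub_quot {M : Type*} {R : Type*} [Ring R] [AddCommGroup M]
    [Module R M] (S : Submodule R M) (h1 : Finite S) (h2 : Finite (M ⧸ S)) : Finite M :=
  @Finite.of_addSubgroup_quotient M _ S.toAddSubgroup h1 h2

private lemma aux_finite_quot_pow {R M : Type*} [CommRing R] [AddCommGroup M] [Module R M]
    (f : R) (h : Finite (M ⧸ (Ideal.span {f} • (⊤ : Submodule R M)))) (n : ℕ) :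
    Finite (M ⧸ (Ideal.span {f} ^ n • (⊤ : Submodule R M))) := by
  induction n with
  | zero =>
    have hs : Subsingleton (M ⧸ (Ideal.span {f} ^ 0 • (⊤ : Submodule R M))) := by
      rw [Submodule.Quotient.subsingleton_iff, pow_zero, Ideal.one_eq_top, top_smul]
    exact Finite.of_subsingleton
  | succ n ih =>
    set I : Ideal R := Ideal.span {f} with hI
    set S : Submodule R M := I ^ n • ⊤ with hS
    set T : Submodule R M := I ^ (n + 1) • ⊤ with hT
    have hTS : T ≤ S := Submodule.smul_mono_left (Ideal.pow_le_pow_right (by omega))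
    set ψ : M →ₗ[R] M ⧸ T := T.mkQ ∘ₗ (LinearMap.lsmul R M (f ^ n)) with hψ
    have hker : I • (⊤ : Submodule R M) ≤ LinearMap.ker ψ := by
      rw [Submodule.smul_le]
      intro r hr m _
      have hmem : (f ^ n * r) • m ∈ T := by
        apply Submodule.smul_mem_smul _ (Submodule.mem_top)
        have h1 : f ^ n ∈ I ^ n := Ideal.pow_mem_pow (Ideal.mem_span_singleton_self f) n
        have := Ideal.mul_mem_mul h1 hr
        rwa [← pow_succ] at this
      simp only [hψ, LinearMap.mem_ker, LinearMap.comp_apply, LinearMap.lsmul_apply,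
        Submodule.mkQ_apply, Submodule.Quotient.mk_eq_zero]
      rwa [smul_smul]
    have hrange : LinearMap.range ψ = S.map T.mkQ := by
      have h1 : S = Submodule.map (LinearMap.lsmul R M (f ^ n)) ⊤ := by
        rw [hS, Ideal.span_singleton_pow, Submodule.ideal_span_singleton_smul]
        ext m
        constructor
        · intro hm
          obtain ⟨y, hy, hym⟩ := Set.mem_smul_set.mp hm
          exact ⟨y, trivial, hym⟩
        · rintro ⟨y, -, rfl⟩
          exact Set.smul_mem_smul_set trivial
      rw [h1, hψ, ← Submodule.map_comp, ← Submodule.map_top]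
    set ψ' : M ⧸ (I • (⊤ : Submodule R M)) →ₗ[R] M ⧸ T := Submodule.liftQ _ ψ hker with hψ'
    have hr' : LinearMap.range ψ' = S.map T.mkQ := by
      rw [hψ', Submodule.range_liftQ, hrange]
    have hfinset : (Set.range ψ').Finite := Set.finite_range _
    have hA : Finite (S.map T.mkQ) := by
      have hco : ((S.map T.mkQ : Submodule R (M ⧸ T)) : Set (M ⧸ T)) = Set.range ψ' := by
        rw [← hr']; exact LinearMap.coe_range _
      have : ((S.map T.mkQ : Submodule R (M ⧸ T)) : Set (M ⧸ T)).Finite := hco ▸ hfinset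
      exact this.to_subtype
    have hQ : Finite ((M ⧸ T) ⧸ (S.map T.mkQ)) :=
      Finite.of_equiv _ (Submodule.quotientQuotientEquivQuotient T S hTS).symm.toEquiv
    exact aux_finite_of_sub_quot (S.map T.mkQ) hA hQ

private lemma aux_key {R M : Type u} [CommRing R] [IsNoetherianRing R] [AddCommGroup M]
    [Module R M] [Module.Finite R M] (f : R)
    (hfin : Finite (M ⧸ (Ideal.span {f} • (⊤ : Submodule R M))))
    (p : Ideal R) (hp : IsAssociatedPrime p M) :
    Finite (R ⧸ (Ideal.span {f} ⊔ p)) := by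
  classical
  obtain ⟨hprime, x, hx⟩ := isAssociatedPrime_iff.mp hp
  set I : Ideal R := Ideal.span {f} with hIdef
  set N : Submodule R M := Submodule.span R {x} with hN
  obtain ⟨k, hk⟩ := Ideal.exists_pow_inf_eq_pow_smul (R := R) (M := M) I N
  have hAR : I ^ (k + 1) • ⊤ ⊓ N = I • (I ^ k • ⊤ ⊓ N) := by
    have h := hk (k + 1) (by omega)
    simpa using h
  have hfinQ : Finite (M ⧸ (I ^ (k + 1) • (⊤ : Submodule R M))) :=
    aux_finite_quot_pow f hfin (k + 1)
  set φ := LinearMap.toSpanSingleton R M x with hφ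
  set ψ : R →ₗ[R] M ⧸ (I ^ (k + 1) • (⊤ : Submodule R M)) :=
    (I ^ (k + 1) • (⊤ : Submodule R M)).mkQ ∘ₗ φ with hψ
  have hxN : x ∈ N := Submodule.mem_span_singleton_self x
  have hIN : I • N = Submodule.span R {f • x} := by
    rw [hIdef, hN, Submodule.span_smul_span]
    congr 1
    simp
  have hker : LinearMap.ker ψ ≤ I ⊔ p := by
    intro r hr
    have hrx : r • x ∈ (I ^ (k + 1) • (⊤ : Submodule R M)) := by
      have h0 : ψ r = 0 := hr
      rw [hψ] at h0
      simp only [LinearMap.comp_apply, Submodule.mkQ_apply, hφ,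
        LinearMap.toSpanSingleton_apply] at h0
      exact (Submodule.Quotient.mk_eq_zero _).mp h0
    have hrN : r • x ∈ N := Submodule.smul_mem _ r hxN
    have h1 : r • x ∈ I • (I ^ k • ⊤ ⊓ N) := hAR ▸ ⟨hrx, hrN⟩
    have h2 : r • x ∈ I • N := Submodule.smul_mono (le_refl I) inf_le_right h1
    rw [hIN] at h2
    obtain ⟨s, hs⟩ := Submodule.mem_span_singleton.mp h2
    have hzero : (r - s * f) • x = 0 := by
      have hss : s • (f • x) = (s * f) • x := by rw [smul_smul]
      rw [sub_smul, ← hss, hs, sub_self]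
    have hpmem : r - s * f ∈ p := by
      rw [hx, Submodule.bot_colon']
      exact Submodule.mem_annihilator_span_singleton x _ |>.mpr hzero
    have hfI : s * f ∈ I := Ideal.mul_mem_left _ s (Ideal.mem_span_singleton_self f)
    have hr' : r = s * f + (r - s * f) := by ring
    rw [hr']
    exact Submodule.add_mem _ (Submodule.mem_sup_left hfI) (Submodule.mem_sup_right hpmem)
  haveI : Finite (R ⧸ LinearMap.ker ψ) := by
    haveI : Finite (LinearMap.range ψ) := Subtype.finite
    exact Finite.of_equiv _ (LinearMap.quotKerEquivRange ψ).symm.toEquiv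
  have hsurj : Function.Surjective
      (Submodule.mapQ (LinearMap.ker ψ) (I ⊔ p) LinearMap.id hker) := by
    intro y
    obtain ⟨a, rfl⟩ := Submodule.mkQ_surjective _ y
    exact ⟨Submodule.Quotient.mk a, by rw [Submodule.mapQ_apply]; rfl⟩
  exact Finite.of_surjective _ hsurj

/-- Let `M` be a finitely generated module over
`R_d = ℤ[u₁^{±1},…,u_d^{±1}]` (the group algebra of `ℤ^d` over `ℤ`) and
`f ∈ R_d`. If `M/fM` is finite, then for every associated prime `p` of `M` the
quotient `(R_d/p)/f·(R_d/p) ≅ R_d/((f)+p)` is finite. -/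
theorem finite_on_associated_primes_of_finite
    (d : ℕ) (M : Type*) [AddCommGroup M]
    [Module (AddMonoidAlgebra ℤ (Fin d → ℤ)) M]
    [Module.Finite (AddMonoidAlgebra ℤ (Fin d → ℤ)) M]
    (f : AddMonoidAlgebra ℤ (Fin d → ℤ))
    (hfin : Finite (M ⧸ (Ideal.span {f} • (⊤ : Submodule (AddMonoidAlgebra ℤ (Fin d → ℤ)) M)))) :
    ∀ p ∈ associatedPrimes (AddMonoidAlgebra ℤ (Fin d → ℤ)) M,
      Finite (AddMonoidAlgebra ℤ (Fin d → ℤ) ⧸ (Ideal.span {f} ⊔ p)) := by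
  classical
  intro p hp
  haveI : AddMonoid.FG (Fin d → ℤ) :=
    AddGroup.fg_iff_addMonoid_fg.mp (Module.Finite.iff_addGroup_fg.mp inferInstance)
  haveI : Algebra.FiniteType ℤ (AddMonoidAlgebra ℤ (Fin d → ℤ)) :=
    AddMonoidAlgebra.finiteType_of_fg ℤ _
  haveI : IsNoetherianRing (AddMonoidAlgebra ℤ (Fin d → ℤ)) :=
    Algebra.FiniteType.isNoetherianRing ℤ _
  -- replace `M` by a universe-0 model
  obtain ⟨n, π, hπ⟩ := Module.Finite.exists_fin' (AddMonoidAlgebra ℤ (Fin d → ℤ)) M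
  set M₀ : Type := (Fin n → AddMonoidAlgebra ℤ (Fin d → ℤ)) ⧸ LinearMap.ker π with hM₀
  let e : M₀ ≃ₗ[AddMonoidAlgebra ℤ (Fin d → ℤ)] M := LinearMap.quotKerEquivOfSurjective π hπ
  haveI : Module.Finite (AddMonoidAlgebra ℤ (Fin d → ℤ)) M₀ := Module.Finite.quotient _ _
  have hmap : Submodule.map (e.symm : M →ₗ[AddMonoidAlgebra ℤ (Fin d → ℤ)] M₀)
      (Ideal.span {f} • (⊤ : Submodule (AddMonoidAlgebra ℤ (Fin d → ℤ)) M)) =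
      Ideal.span {f} • (⊤ : Submodule (AddMonoidAlgebra ℤ (Fin d → ℤ)) M₀) := by
    rw [Submodule.map_smul'']
    congr 1
    rw [Submodule.map_top]
    exact LinearMap.range_eq_top.mpr e.symm.surjective
  have hfin₀ : Finite (M₀ ⧸ (Ideal.span {f} • (⊤ : Submodule (AddMonoidAlgebra ℤ (Fin d → ℤ)) M₀))) :=
    Finite.of_equiv _ (Submodule.Quotient.equiv _ _ e.symm hmap).toEquiv
  have hp₀ : IsAssociatedPrime p M₀ :=
    IsAssociatedPrime.map_of_injective (e.symm : M →ₗ[AddMonoidAlgebra ℤ (Fin d → ℤ)] M₀) hp e.symm.injective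
  exact aux_key f hfin₀ p hp₀
end

section
/- Let M be a finitely generated torsion-free-rank-one module over R_d = ℤ[u_1^{±1},...,u_d^{±1}] with a prime filtration 0 = M_0 ⊆ M_1 ⊆ ... ⊆ M_n = M where M_k/M_{k-1} ≅ R_d/q_k. If k is the least index with char(R_d/q_k) = 0, then char(R_d/q_j) > 0 for all j > k; in particular exactly one quotient in the filtration has characteristic zero. -/
/-- Let `M` be a finitely generated torsion-free-rank-one module over
`R_d = ℤ[u₁^{±1},…,u_d^{±1}]` (the group algebra of `ℤ^d` over `ℤ`) with a
prime filtration `0 = M₀ ⊆ … ⊆ Mₙ = M`, `M_k/M_{k-1} ≅ R_d/q_k`. If `k` is the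
least index with `char(R_d/q_k) = 0` (i.e. `q_k ∩ ℤ = 0`), then
`char(R_d/q_j) > 0` for all `j > k`; in particular exactly one quotient in the
filtration has characteristic zero. -/
theorem unique_char_zero_quotient_in_prime_filtration
    (d : ℕ) (M : Type*) [AddCommGroup M]
    [Module (AddMonoidAlgebra ℤ (Fin d → ℤ)) M]
    [Module.Finite (AddMonoidAlgebra ℤ (Fin d → ℤ)) M]
    (hrank : Module.finrank ℚ (TensorProduct ℤ ℚ M) = 1)
    (n : ℕ) (Mf : ℕ → Submodule (AddMonoidAlgebra ℤ (Fin d → ℤ)) M)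
    (q : ℕ → Ideal (AddMonoidAlgebra ℤ (Fin d → ℤ)))
    (h0 : Mf 0 = ⊥) (hn : Mf n = ⊤)
    (hmono : ∀ j < n, Mf j ≤ Mf (j + 1))
    (hprime : ∀ j < n, (q j).IsPrime)
    (hiso : ∀ j (hj : j < n),
      Nonempty ((↥(Mf (j + 1)) ⧸ ((Mf j).comap (Mf (j + 1)).subtype))
        ≃ₗ[AddMonoidAlgebra ℤ (Fin d → ℤ)] (AddMonoidAlgebra ℤ (Fin d → ℤ) ⧸ q j)))
    (k : ℕ) (hk : k < n)
    (hchar0 : (q k).comap (algebraMap ℤ (AddMonoidAlgebra ℤ (Fin d → ℤ))) = ⊥)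
    (hleast : ∀ j < k,
      (q j).comap (algebraMap ℤ (AddMonoidAlgebra ℤ (Fin d → ℤ))) ≠ ⊥) :
    (∀ j, k < j → j < n →
      (q j).comap (algebraMap ℤ (AddMonoidAlgebra ℤ (Fin d → ℤ))) ≠ ⊥) ∧
    (∃! j, j < n ∧
      (q j).comap (algebraMap ℤ (AddMonoidAlgebra ℤ (Fin d → ℤ))) = ⊥) := by
  set R := AddMonoidAlgebra ℤ (Fin d → ℤ) with hR
  -- monotonicity of the filtration
  have hmono' : ∀ a b : ℕ, a ≤ b → b ≤ n → Mf a ≤ Mf b := by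
    intro a b hab hbn
    induction b with
    | zero => exact Nat.le_zero.mp hab ▸ le_refl _
    | succ b ih =>
      rcases Nat.eq_or_lt_of_le hab with h | h
      · exact h ▸ le_refl _
      · exact le_trans (ih (Nat.lt_succ_iff.mp h) (le_of_lt hbn))
          (hmono b (lt_of_lt_of_le (Nat.lt_succ_self b) hbn))
  -- ℤ-smul of submodule members
  have zmem : ∀ (N : Submodule R M) (c : ℤ) (z : M), z ∈ N → c • z ∈ N := by
    intro N c z hz
    rw [← Int.cast_smul_eq_zsmul R]
    exact N.smul_mem _ hz
  -- torsion elements die in the rationalization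
  have hbc : IsLocalizedModule (nonZeroDivisors ℤ) (TensorProduct.mk ℤ ℚ M 1) :=
    (isLocalizedModule_iff_isBaseChange (nonZeroDivisors ℤ) ℚ _).mpr
      (TensorProduct.isBaseChange ℤ M ℚ)
  have tor : ∀ z : M, (1 : ℚ) ⊗ₜ[ℤ] z = (0 : TensorProduct ℤ ℚ M) →
      ∃ m : ℤ, m ≠ 0 ∧ m • z = 0 := by
    intro z hz
    obtain ⟨s, hs⟩ := (IsLocalizedModule.eq_zero_iff (nonZeroDivisors ℤ)
      (TensorProduct.mk ℤ ℚ M 1)).mp hz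
    exact ⟨(s : ℤ), mem_nonZeroDivisors_iff_ne_zero.mp s.2, hs⟩
  -- picking a "generic" element in a char-zero layer
  have elem : ∀ i, i < n → (q i).comap (algebraMap ℤ R) = ⊥ →
      ∃ x : M, x ∈ Mf (i + 1) ∧ ∀ m : ℤ, m • x ∈ Mf i → m = 0 := by
    intro i hi hqi
    obtain ⟨e⟩ := hiso i hi
    obtain ⟨x, hx⟩ := Submodule.Quotient.mk_surjective _
      (e.symm (Ideal.Quotient.mk (q i) 1))
    refine ⟨x.1, x.2, fun m hm => ?_⟩
    have key : ∀ c : R, c • (x : M) ∈ Mf i → c ∈ q i := by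
      intro c hc
      have h1 : (Submodule.Quotient.mk (c • x) :
          ↥(Mf (i + 1)) ⧸ (Mf i).comap (Mf (i + 1)).subtype) = 0 :=
        (Submodule.Quotient.mk_eq_zero _).mpr hc
      rw [Submodule.Quotient.mk_smul, hx, ← map_smul e.symm] at h1
      have h2 : c • Ideal.Quotient.mk (q i) (1 : R) = 0 :=
        e.symm.map_eq_zero_iff.mp h1
      rw [← Ideal.Quotient.mk_eq_mk, ← Submodule.Quotient.mk_smul, smul_eq_mul,
        mul_one, Submodule.Quotient.mk_eq_zero] at h2
      exact h2
    have hc' : (algebraMap ℤ R m) • (x : M) ∈ Mf i := by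
      rw [eq_intCast (algebraMap ℤ R) m, Int.cast_smul_eq_zsmul]
      exact hm
    have hmem : m ∈ (q i).comap (algebraMap ℤ R) := Ideal.mem_comap.mpr (key _ hc')
    rw [hqi] at hmem
    exact Ideal.mem_bot.mp hmem
  -- at most one char-zero layer
  have main : ∀ i j, i < j → j < n → (q i).comap (algebraMap ℤ R) = ⊥ →
      (q j).comap (algebraMap ℤ R) = ⊥ → False := by
    intro i j hij hjn hqi hqj
    obtain ⟨x, hx1, hx2⟩ := elem i (lt_trans hij hjn) hqi
    obtain ⟨y, hy1, hy2⟩ := elem j hjn hqj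
    have hZ : ∀ p r : ℤ, (1 : ℚ) ⊗ₜ[ℤ] (p • x + r • y) = (0 : TensorProduct ℤ ℚ M) →
        p = 0 ∧ r = 0 := by
      intro p r h
      obtain ⟨m, hm0, hm⟩ := tor _ h
      rw [smul_add, ← mul_smul, ← mul_smul] at hm
      have hxj : (m * p) • x ∈ Mf j :=
        zmem _ _ _ (hmono' (i + 1) j hij (le_of_lt hjn) hx1)
      have hyj : (m * r) • y ∈ Mf j := by
        have heq : (m * r) • y = -((m * p) • x) := by
          rw [eq_neg_iff_add_eq_zero, add_comm]
          exact hm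
        rw [heq]
        exact neg_mem hxj
      have hr : r = 0 := by
        rcases mul_eq_zero.mp (hy2 _ hyj) with h' | h'
        · exact absurd h' hm0
        · exact h'
      have hp : p = 0 := by
        have hx0 : (m * p) • x ∈ Mf i := by
          have heq : (m * p) • x = 0 := by
            rw [hr] at hm
            simpa using hm
          rw [heq]; exact zero_mem _
        rcases mul_eq_zero.mp (hx2 _ hx0) with h' | h'
        · exact absurd h' hm0
        · exact h'
      exact ⟨hp, hr⟩
    have li : LinearIndependent ℚ
        ![(1 : ℚ) ⊗ₜ[ℤ] x, (1 : ℚ) ⊗ₜ[ℤ] y] := by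
      rw [LinearIndependent.pair_iff]
      intro s t hst
      set p : ℤ := s.num * t.den with hp
      set r : ℤ := t.num * s.den with hr'
      have hsden : (s.den : ℚ) ≠ 0 := by exact_mod_cast s.den_ne_zero
      have htden : (t.den : ℚ) ≠ 0 := by exact_mod_cast t.den_ne_zero
      have hc1 : ((s.den * t.den : ℤ) : ℚ) * s = (p : ℚ) := by
        have h := Rat.num_div_den s
        rw [div_eq_iff hsden] at h
        rw [hp]
        push_cast
        rw [h]
        ring
      have hc2 : ((s.den * t.den : ℤ) : ℚ) * t = (r : ℚ) := by
        have h := Rat.num_div_den t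
        rw [div_eq_iff htden] at h
        rw [hr']
        push_cast
        rw [h]
        ring
      have h2 : ((s.den * t.den : ℤ) : ℚ) • (s • ((1 : ℚ) ⊗ₜ[ℤ] x)
          + t • ((1 : ℚ) ⊗ₜ[ℤ] y)) = (0 : TensorProduct ℤ ℚ M) := by
        rw [hst, smul_zero]
      rw [smul_add, smul_smul, smul_smul, hc1, hc2] at h2
      have h1 : (1 : ℚ) ⊗ₜ[ℤ] (p • x + r • y) = (0 : TensorProduct ℤ ℚ M) := by
        rw [TensorProduct.tmul_add, TensorProduct.tmul_smul, TensorProduct.tmul_smul,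
          ← Int.cast_smul_eq_zsmul ℚ, ← Int.cast_smul_eq_zsmul ℚ]
        exact h2
      obtain ⟨hp0, hr0⟩ := hZ p r h1
      constructor
      · refine Rat.num_eq_zero.mp ?_
        rcases mul_eq_zero.mp hp0 with h' | h'
        · exact h'
        · exact absurd h' (by exact_mod_cast htden)
      · refine Rat.num_eq_zero.mp ?_
        rcases mul_eq_zero.mp hr0 with h' | h'
        · exact h'
        · exact absurd h' (by exact_mod_cast hsden)
    have hr1 : Module.rank ℚ (TensorProduct ℤ ℚ M) = 1 :=
      Module.rank_eq_one_iff_finrank_eq_one.mpr hrank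
    have h2le := li.cardinal_lift_le_rank
    rw [hr1] at h2le
    simp at h2le
  refine ⟨fun j hkj hjn hqj => main k j hkj hjn hchar0 hqj, k, ⟨hk, hchar0⟩, ?_⟩
  rintro j ⟨hjn, hqj⟩
  rcases lt_trichotomy j k with h | h | h
  · exact absurd hqj (hleast j h)
  · exact h
  · exact (main k j h hjn hchar0 hqj).elim
end

section
/- For the ℤ²-action α dual to multiplication by 2 and by 3 on ℤ[1/6], the number of fixed points of α^{(n₁,n₂)} with n₁n₂ ≠ 0 equals |2^{n₁}3^{n₂} − 1|_∞ · |2^{n₁}3^{n₂} − 1|_2 · |2^{n₁}3^{n₂} − 1|_3, where |·|_∞, |·|_2, |·|_3 are the real, 2-adic and 3-adic absolute values on ℚ. -/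
lemma my_mem_closure_iff (q : ℚ) :
    q ∈ Subring.closure {(6 : ℚ)⁻¹} ↔ ∃ (z : ℤ) (k : ℕ), q = z / 6 ^ k := by
  constructor
  · intro hq
    induction hq using Subring.closure_induction with
    | mem x hx => exact ⟨1, 1, by rw [Set.mem_singleton_iff.mp hx]; norm_num⟩
    | zero => exact ⟨0, 0, by norm_num⟩
    | one => exact ⟨1, 0, by norm_num⟩
    | add x y hx hy ihx ihy =>
      obtain ⟨z, k, rfl⟩ := ihx; obtain ⟨w, l, rfl⟩ := ihy
      exact ⟨z * 6 ^ l + w * 6 ^ k, k + l, by push_cast; field_simp; ring_nf⟩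
    | neg x hx ihx =>
      obtain ⟨z, k, rfl⟩ := ihx
      exact ⟨-z, k, by push_cast; ring⟩
    | mul x y hx hy ihx ihy =>
      obtain ⟨z, k, rfl⟩ := ihx; obtain ⟨w, l, rfl⟩ := ihy
      exact ⟨z * w, k + l, by push_cast; field_simp; ring_nf⟩
  · rintro ⟨z, k, rfl⟩
    have h6 : (6 : ℚ)⁻¹ ∈ Subring.closure {(6 : ℚ)⁻¹} := Subring.subset_closure rfl
    have : ((z : ℚ)) * ((6:ℚ)⁻¹) ^ k ∈ Subring.closure {(6 : ℚ)⁻¹} :=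
      mul_mem (intCast_mem _ z) (pow_mem h6 k)
    simpa [div_eq_mul_inv, inv_pow] using this

lemma quot_equiv (M : ℤ) (hcop : IsCoprime M 6) :
    Nonempty (((Subring.closure {(6:ℚ)⁻¹}) ⧸
      Ideal.span {(M : Subring.closure {(6:ℚ)⁻¹})}) ≃+* ZMod M.natAbs) := by
  set R := Subring.closure {(6:ℚ)⁻¹} with hR
  set I : Ideal R := Ideal.span {(M : R)} with hI
  set φ : ℤ →+* R ⧸ I := (Ideal.Quotient.mk I).comp (Int.castRingHom R) with hφ
  obtain ⟨a, b, hab⟩ := hcop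
  have hsurj : Function.Surjective φ := by
    intro x
    obtain ⟨r, rfl⟩ := Ideal.Quotient.mk_surjective x
    obtain ⟨z, k, hq⟩ := (my_mem_closure_iff (r : ℚ)).mp r.2
    have hdvd : M ∣ (6 * b) ^ k - 1 := by
      have h1 : (6 * b : ℤ) ≡ 1 [ZMOD M] := Int.ModEq.symm (Int.modEq_iff_dvd.mpr ⟨-a, by linarith⟩)
      have h2 : ((6 * b : ℤ)) ^ k ≡ 1 ^ k [ZMOD M] := h1.pow k
      simpa using (Int.ModEq.dvd h2.symm)
    obtain ⟨u, hu⟩ := hdvd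
    have hc : ((z * u : ℤ) : ℚ) / 6 ^ k ∈ R := (my_mem_closure_iff _).mpr ⟨z * u, k, rfl⟩
    have hthis : ((6:ℚ) * b) ^ k - 1 = (M : ℚ) * u := by exact_mod_cast congrArg (Int.cast : ℤ → ℚ) hu
    refine ⟨z * b ^ k, Ideal.Quotient.eq.mpr ?_⟩
    rw [show ((Int.castRingHom R) (z * b ^ k)) - r = (M : R) * ⟨_, hc⟩ from ?_]
    · exact Ideal.mem_span_singleton'.mpr ⟨_, (mul_comm _ _)⟩
    · apply Subtype.ext
      rw [eq_intCast]
      push_cast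
      rw [hq]
      field_simp
      linear_combination (z : ℚ) * hthis
  have hker : RingHom.ker φ = Ideal.span {M} := by
    ext z
    simp only [RingHom.mem_ker, hφ, RingHom.comp_apply, Ideal.Quotient.eq_zero_iff_mem,
      Ideal.mem_span_singleton]
    constructor
    · intro hz
      rw [hI, Ideal.mem_span_singleton] at hz
      obtain ⟨c, hc⟩ := hz
      obtain ⟨w, k, hw⟩ := (my_mem_closure_iff (c : ℚ)).mp c.2
      have hQ : (z : ℚ) = (M : ℚ) * (w / 6 ^ k) := by
        have h2 := congrArg Subtype.val hc
        have h3 : (z : ℚ) = (M : ℚ) * (c : ℚ) := by exact_mod_cast h2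
        rw [h3, hw]
      have hZ : z * 6 ^ k = M * w := by
        have h6 : ((6:ℚ)) ^ k ≠ 0 := by positivity
        field_simp at hQ
        exact_mod_cast hQ
      exact (IsCoprime.pow_right ⟨a, b, hab⟩).dvd_of_dvd_mul_right ⟨w, hZ⟩
    · rintro ⟨c, rfl⟩
      rw [hI, Ideal.mem_span_singleton]
      exact ⟨(c : R), map_mul (Int.castRingHom R) M c⟩
  exact ⟨((Ideal.quotEquivOfEq hker.symm).trans
    (RingHom.quotientKerEquivOfSurjective hsurj)).symm.trans (Int.quotientSpanEquivZMod M)⟩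

lemma my_not_dvd (a₁ b₁ a₂ b₂ : ℕ) (h1 : a₁ = 0 ∧ b₁ ≠ 0 ∨ b₁ = 0 ∧ a₁ ≠ 0)
    (h2 : a₂ = 0 ∧ b₂ ≠ 0 ∨ b₂ = 0 ∧ a₂ ≠ 0) :
    ¬ (2:ℤ) ∣ ((2:ℤ)^a₁*3^a₂ - 2^b₁*3^b₂) ∧ ¬ (3:ℤ) ∣ ((2:ℤ)^a₁*3^a₂ - 2^b₁*3^b₂) := by
  have p2 : Prime (2 : ℤ) := Int.prime_two
  have p3 : Prime (3 : ℤ) := Int.prime_three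
  constructor
  · rcases h1 with ⟨rfl, hb⟩ | ⟨rfl, ha⟩
    · intro hd
      have h1' : (2:ℤ) ∣ 2^b₁*3^b₂ := dvd_mul_of_dvd_left (dvd_pow_self 2 hb) _
      have : (2:ℤ) ∣ 3^a₂ := by have := dvd_add hd h1'; simpa using this
      exact absurd (p2.dvd_of_dvd_pow this) (by norm_num)
    · intro hd
      have h1' : (2:ℤ) ∣ 2^a₁*3^a₂ := dvd_mul_of_dvd_left (dvd_pow_self 2 ha) _
      have : (2:ℤ) ∣ 3^b₂ := by have := dvd_sub h1' hd; simpa using this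
      exact absurd (p2.dvd_of_dvd_pow this) (by norm_num)
  · rcases h2 with ⟨rfl, hb⟩ | ⟨rfl, ha⟩
    · intro hd
      have h1' : (3:ℤ) ∣ 2^b₁*3^b₂ := dvd_mul_of_dvd_right (dvd_pow_self 3 hb) _
      have : (3:ℤ) ∣ 2^a₁ := by have := dvd_add hd h1'; simpa using this
      exact absurd (p3.dvd_of_dvd_pow this) (by norm_num)
    · intro hd
      have h1' : (3:ℤ) ∣ 2^a₁*3^a₂ := dvd_mul_of_dvd_right (dvd_pow_self 3 ha) _
      have : (3:ℤ) ∣ 2^b₁ := by have := dvd_sub h1' hd; simpa using this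
      exact absurd (p3.dvd_of_dvd_pow this) (by norm_num)

lemma my_pn_pow (p : ℕ) [hp : Fact p.Prime] (k : ℕ) :
    padicNorm p ((p:ℚ)^k) = ((p:ℚ))^(-(k:ℤ)) := by
  induction k with
  | zero => simp
  | succ n ih =>
    have hp0 : (p:ℚ) ≠ 0 := by exact_mod_cast hp.out.ne_zero
    rw [pow_succ, padicNorm.mul, ih, padicNorm.padicNorm_p hp.out.one_lt]
    rw [show (-((n+1:ℕ):ℤ)) = -(n:ℤ) + (-1) by push_cast; ring, zpow_add₀ hp0, zpow_neg_one]

/-- For the `ℤ²`-action `α` dual to multiplication by `2` and `3` on `ℤ[1/6]`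
(realized as the subring of `ℚ` generated by `1/6`), the number of fixed points
of `α^{(n₁,n₂)}` with `n₁n₂ ≠ 0` — which equals the cardinality of
`ℤ[1/6]/(2^{n₁}3^{n₂}-1)ℤ[1/6]` — equals
`|2^{n₁}3^{n₂}-1|_∞ · |2^{n₁}3^{n₂}-1|_2 · |2^{n₁}3^{n₂}-1|_3`. -/
theorem fixed_points_times2_times3 (n₁ n₂ : ℤ) (h : n₁ * n₂ ≠ 0)
    (r : Subring.closure {(6 : ℚ)⁻¹})
    (hr : (r : ℚ) = (2 : ℚ) ^ n₁ * (3 : ℚ) ^ n₂) :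
    Finite ((Subring.closure {(6 : ℚ)⁻¹}) ⧸ Ideal.span {r - 1}) ∧
    ((Nat.card ((Subring.closure {(6 : ℚ)⁻¹}) ⧸ Ideal.span {r - 1}) : ℚ) =
      |(2 : ℚ) ^ n₁ * (3 : ℚ) ^ n₂ - 1|
        * padicNorm 2 ((2 : ℚ) ^ n₁ * (3 : ℚ) ^ n₂ - 1)
        * padicNorm 3 ((2 : ℚ) ^ n₁ * (3 : ℚ) ^ n₂ - 1)) := by
  have hn₁ : n₁ ≠ 0 := fun hh => h (by rw [hh, zero_mul])
  have hn₂ : n₂ ≠ 0 := fun hh => h (by rw [hh, mul_zero])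
  set a₁ := n₁.toNat with ha₁; set b₁ := (-n₁).toNat with hb₁
  set a₂ := n₂.toNat with ha₂; set b₂ := (-n₂).toNat with hb₂
  have e₁ : (a₁:ℤ) - b₁ = n₁ := by omega
  have e₂ : (a₂:ℤ) - b₂ = n₂ := by omega
  have hc₁ : a₁ = 0 ∧ b₁ ≠ 0 ∨ b₁ = 0 ∧ a₁ ≠ 0 := by omega
  have hc₂ : a₂ = 0 ∧ b₂ ≠ 0 ∨ b₂ = 0 ∧ a₂ ≠ 0 := by omega
  set M : ℤ := 2^a₁*3^a₂ - 2^b₁*3^b₂ with hMdef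
  set B : ℤ := 2^b₁*3^b₂ with hBdef
  obtain ⟨hM2, hM3⟩ := my_not_dvd a₁ b₁ a₂ b₂ hc₁ hc₂
  have hM0 : M ≠ 0 := by
    intro hh
    apply hM2
    rw [show ((2:ℤ)^a₁*3^a₂ - 2^b₁*3^b₂) = M from rfl, hh]
    exact dvd_zero 2
  have hcop : IsCoprime M 6 := by
    rw [show (6:ℤ) = 2*3 by norm_num]
    exact IsCoprime.mul_right ((Int.prime_two.coprime_iff_not_dvd.mpr hM2).symm)
      ((Int.prime_three.coprime_iff_not_dvd.mpr hM3).symm)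
  have hBQ : (0:ℚ) < (B:ℚ) := by rw [hBdef]; push_cast; positivity
  have hBne : (B:ℚ) ≠ 0 := ne_of_gt hBQ
  have hξ : (2:ℚ)^n₁ * (3:ℚ)^n₂ = ((2^a₁*3^a₂ : ℤ):ℚ)/(B:ℚ) := by
    rw [← e₁, ← e₂, zpow_sub₀ (by norm_num : (2:ℚ) ≠ 0), zpow_sub₀ (by norm_num : (3:ℚ) ≠ 0)]
    rw [hBdef]
    push_cast
    rw [zpow_natCast, zpow_natCast, zpow_natCast, zpow_natCast, div_mul_div_comm]
  have hrB : (r : ℚ) - 1 = (M:ℚ) / (B:ℚ) := by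
    rw [hr, hξ, hMdef]
    push_cast
    field_simp
  -- B⁻¹ ∈ R
  have hBinv : (B:ℚ)⁻¹ ∈ Subring.closure {(6:ℚ)⁻¹} := by
    refine (my_mem_closure_iff _).mpr ⟨2^b₂*3^b₁, b₁+b₂, ?_⟩
    rw [hBdef]
    push_cast
    rw [show (6:ℚ) = 2*3 by norm_num, mul_pow, pow_add, pow_add]
    rw [eq_div_iff (by positivity)]
    field_simp
  have hspan : Ideal.span {r - 1} = Ideal.span {(M : Subring.closure {(6:ℚ)⁻¹})} := by
    apply le_antisymm <;> rw [Ideal.span_singleton_le_span_singleton]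
    · exact ⟨⟨(B:ℚ)⁻¹, hBinv⟩, Subtype.ext (by push_cast; rw [hrB]; field_simp)⟩
    · exact ⟨(B : Subring.closure {(6:ℚ)⁻¹}), Subtype.ext (by push_cast; rw [hrB]; field_simp)⟩
  obtain ⟨e⟩ := quot_equiv M hcop
  rw [hspan]
  haveI : NeZero M.natAbs := ⟨Int.natAbs_ne_zero.mpr hM0⟩
  have hsub : (2:ℚ)^n₁ * (3:ℚ)^n₂ - 1 = (M:ℚ)/(B:ℚ) := by
    rw [← hr, hrB]
  constructor
  · exact Finite.of_equiv _ e.symm.toEquiv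
  · rw [Nat.card_congr e.toEquiv, Nat.card_zmod, hsub]
    rw [abs_div, abs_of_pos hBQ, padicNorm.div, padicNorm.div]
    rw [padicNorm.int_eq_one_iff M |>.mpr hM2, padicNorm.int_eq_one_iff M |>.mpr hM3]
    have hB2 : padicNorm 2 (B:ℚ) = (2:ℚ)^(-(b₁:ℤ)) := by
      rw [hBdef]; push_cast
      rw [padicNorm.mul]
      rw [show ((2:ℚ)) = ((2:ℕ):ℚ) by norm_num] 
      rw [my_pn_pow 2 b₁]
      rw [show ((3:ℚ))^b₂ = (((3:ℤ)^b₂ : ℤ):ℚ) by push_cast; ring]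
      rw [padicNorm.int_eq_one_iff _ |>.mpr (fun hd => absurd (Int.prime_two.dvd_of_dvd_pow hd) (by norm_num))]
      norm_num
    have hB3 : padicNorm 3 (B:ℚ) = (3:ℚ)^(-(b₂:ℤ)) := by
      rw [hBdef]; push_cast
      rw [padicNorm.mul]
      rw [show ((3:ℚ)) = ((3:ℕ):ℚ) by norm_num]
      rw [my_pn_pow 3 b₂]
      rw [show ((2:ℚ))^b₁ = (((2:ℤ)^b₁ : ℤ):ℚ) by push_cast; ring]
      rw [padicNorm.int_eq_one_iff _ |>.mpr (fun hd => absurd (Int.prime_three.dvd_of_dvd_pow hd) (by norm_num))]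
      norm_num
    rw [hB2, hB3, Nat.cast_natAbs]
    push_cast
    rw [hBdef]
    push_cast
    rw [zpow_neg, zpow_neg, zpow_natCast, zpow_natCast]
    field_simp
end

section
/- For r = 2^{n₁}3^{n₂} with (n₁,n₂) ∈ ℤ², n₁n₂ ≠ 0, the quotient ℤ[1/6]/(r−1)ℤ[1/6] is a finite group of cardinality equal to the numerator of r−1 written in lowest terms divided by its largest factor composed of 2s and 3s; equivalently of cardinality |r−1|_∞ |r−1|_2 |r−1|_3. -/
namespace CardQuotAux

abbrev R : Subring ℚ := Subring.closure {(6 : ℚ)⁻¹}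

lemma six_inv_mem : (6 : ℚ)⁻¹ ∈ R := Subring.subset_closure rfl

lemma two_mem : (2 : ℚ) ∈ R := by exact_mod_cast intCast_mem R (2 : ℤ)
lemma three_mem : (3 : ℚ) ∈ R := by exact_mod_cast intCast_mem R (3 : ℤ)

lemma isUnit_six : IsUnit (6 : R) :=
  IsUnit.of_mul_eq_one ⟨(6:ℚ)⁻¹, six_inv_mem⟩ (by
    refine Subtype.ext ?_
    push_cast
    rw [show ((6:R):ℚ) = 6 from by norm_cast]
    norm_num)

lemma isUnit_two : IsUnit (2 : R) :=
  IsUnit.of_mul_eq_one ⟨3 * (6:ℚ)⁻¹, mul_mem three_mem six_inv_mem⟩ (by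
    refine Subtype.ext ?_
    push_cast
    rw [show ((2:R):ℚ) = 2 from by norm_cast]
    norm_num)

lemma isUnit_three : IsUnit (3 : R) :=
  IsUnit.of_mul_eq_one ⟨2 * (6:ℚ)⁻¹, mul_mem two_mem six_inv_mem⟩ (by
    refine Subtype.ext ?_
    push_cast
    rw [show ((3:R):ℚ) = 3 from by norm_cast]
    norm_num)

lemma exists_rep {x : ℚ} (hx : x ∈ R) : ∃ (a : ℤ) (k : ℕ), x * 6 ^ k = a := by
  induction hx using Subring.closure_induction with
  | mem x hx =>
    rw [Set.mem_singleton_iff] at hx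
    exact ⟨1, 1, by rw [hx]; norm_num⟩
  | zero => exact ⟨0, 0, by norm_num⟩
  | one => exact ⟨1, 0, by norm_num⟩
  | add x y hx hy ihx ihy =>
    obtain ⟨a, k, ha⟩ := ihx
    obtain ⟨b, l, hb⟩ := ihy
    refine ⟨a * 6 ^ l + b * 6 ^ k, k + l, ?_⟩
    push_cast
    linear_combination (6:ℚ) ^ l * ha + (6:ℚ) ^ k * hb
  | neg x hx ihx =>
    obtain ⟨a, k, ha⟩ := ihx
    refine ⟨-a, k, ?_⟩
    push_cast
    linear_combination -ha
  | mul x y hx hy ihx ihy =>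
    obtain ⟨a, k, ha⟩ := ihx
    obtain ⟨b, l, hb⟩ := ihy
    refine ⟨a * b, k + l, ?_⟩
    push_cast
    linear_combination (y * (6:ℚ) ^ l) * ha + (a:ℚ) * hb

instance isLoc : IsLocalization (Submonoid.powers (6 : ℤ)) R := by
  constructor
  constructor
  · rintro ⟨y, k, rfl⟩
    have : algebraMap ℤ R (6 ^ k) = (6 : R) ^ k := by
      rw [map_pow]; norm_num
    rw [this]
    exact isUnit_six.pow k
  · intro z
    obtain ⟨a, k, h⟩ := exists_rep z.2
    refine ⟨⟨a, ⟨6 ^ k, ⟨k, rfl⟩⟩⟩, ?_⟩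
    refine Subtype.ext ?_
    show (z : ℚ) * ((algebraMap ℤ R (6 ^ k) : R) : ℚ) = ((algebraMap ℤ R a : R) : ℚ)
    have h1 : ((algebraMap ℤ R (6 ^ k) : R) : ℚ) = 6 ^ k := by
      simp [eq_intCast]; norm_cast
    have h2 : ((algebraMap ℤ R a : R) : ℚ) = a := by simp [eq_intCast]
    rw [h1, h2, h]
  · intro a b hab
    refine ⟨1, ?_⟩
    have : ((a : ℚ)) = b := by
      have := congrArg (fun x : R => (x : ℚ)) hab
      simpa [eq_intCast] using this
    simp [show a = b by exact_mod_cast this]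


lemma key (m : ℕ) (hm0 : m ≠ 0) (hm2 : ¬ 2 ∣ m) (hm3 : ¬ 3 ∣ m) :
    Nonempty ((R ⧸ Ideal.span {((m : ℕ) : R)}) ≃+* ZMod m) := by
  haveI : NeZero m := ⟨hm0⟩
  have hcop : Nat.Coprime 6 m := by
    have h2 : Nat.Coprime 2 m := (Nat.Prime.coprime_iff_not_dvd Nat.prime_two).mpr hm2
    have h3 : Nat.Coprime 3 m := (Nat.Prime.coprime_iff_not_dvd Nat.prime_three).mpr hm3
    exact Nat.Coprime.mul h2 h3
  have hunit : ∀ y : (Submonoid.powers (6 : ℤ)),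
      IsUnit ((Int.castRingHom (ZMod m)) y) := by
    rintro ⟨y, k, rfl⟩
    have : (Int.castRingHom (ZMod m)) ((6:ℤ) ^ k) = ((6:ℕ) : ZMod m) ^ k := by
      rw [map_pow]
      norm_num
    rw [this]
    exact ((ZMod.isUnit_iff_coprime 6 m).mpr hcop).pow k
  let φ : R →+* ZMod m := IsLocalization.lift (M := Submonoid.powers (6:ℤ)) hunit
  have hsurj : Function.Surjective φ := by
    intro z
    obtain ⟨a, rfl⟩ := ZMod.intCast_surjective z
    exact ⟨algebraMap ℤ R a, IsLocalization.lift_eq hunit a⟩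
  have hker : RingHom.ker φ = Ideal.span {((m : ℕ) : R)} := by
    apply le_antisymm
    · intro x hx
      rw [RingHom.mem_ker] at hx
      obtain ⟨⟨a, s⟩, hs⟩ := IsLocalization.surj (M := Submonoid.powers (6:ℤ)) x
      have h1 : ((a : ℤ) : ZMod m) = 0 := by
        have h := congrArg φ hs
        rw [map_mul, hx, zero_mul, IsLocalization.lift_eq] at h
        exact h.symm
      have hdvd : (m : ℤ) ∣ a := (ZMod.intCast_zmod_eq_zero_iff_dvd a m).mp h1
      obtain ⟨c, rfl⟩ := hdvd
      have hu : IsUnit (algebraMap ℤ R (s : ℤ)) := IsLocalization.map_units R s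
      obtain ⟨u, hu'⟩ := hu
      rw [Ideal.mem_span_singleton]
      refine ⟨algebraMap ℤ R c * ↑u⁻¹, ?_⟩
      rw [← hu'] at hs
      have hx2 : x = algebraMap ℤ R ((m:ℤ) * c) * ↑u⁻¹ := by
        rw [← hs, mul_assoc, Units.mul_inv, mul_one]
      rw [hx2, map_mul]
      have : algebraMap ℤ R ((m:ℕ):ℤ) = ((m:ℕ) : R) := by
        rw [eq_intCast]; norm_cast
      rw [this, mul_assoc]
    · rw [Ideal.span_le]
      intro x hx
      rw [Set.mem_singleton_iff] at hx
      subst hx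
      rw [SetLike.mem_coe, RingHom.mem_ker]
      have : ((m:ℕ) : R) = algebraMap ℤ R ((m:ℕ):ℤ) := by rw [eq_intCast]; norm_cast
      rw [this, IsLocalization.lift_eq]
      simp
  exact ⟨(Ideal.quotEquivOfEq hker.symm).trans (RingHom.quotientKerEquivOfSurjective hsurj)⟩



lemma padicNorm_inv (p : ℕ) [Fact p.Prime] (x : ℚ) : padicNorm p x⁻¹ = (padicNorm p x)⁻¹ := by
  rw [← one_div, ← one_div, padicNorm.div, padicNorm.one]

lemma padicNorm_zpow (p : ℕ) [Fact p.Prime] (x : ℚ) (e : ℤ) :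
    padicNorm p (x ^ e) = padicNorm p x ^ e := by
  have hnat : ∀ n : ℕ, padicNorm p (x ^ n) = padicNorm p x ^ n := by
    intro n
    induction n with
    | zero => simpa using padicNorm.one
    | succ n ih => rw [pow_succ, pow_succ, padicNorm.mul, ih]
  rcases e with n | n
  · simpa using hnat n
  · rw [zpow_negSucc, zpow_negSucc, padicNorm_inv, hnat]

lemma norm_product {x : ℚ} {m : ℕ} (hm2 : ¬ 2 ∣ m) (hm3 : ¬ 3 ∣ m)
    {E2 E3 : ℤ} {s : ℚ} (hs : s = 1 ∨ s = -1)
    (hx : x = s * m * 2 ^ E2 * 3 ^ E3) :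
    |x| * padicNorm 2 x * padicNorm 3 x = m := by
  have h2ne : (2 : ℚ) ^ E2 ≠ 0 := zpow_ne_zero _ two_ne_zero
  have h3ne : (3 : ℚ) ^ E3 ≠ 0 := zpow_ne_zero _ three_ne_zero
  have hnorm : ∀ p : ℕ, [Fact p.Prime] → padicNorm p s = 1 := by
    intro p _
    rcases hs with rfl | rfl
    · exact padicNorm.one
    · rw [show (-1 : ℚ) = -(1:ℚ) from rfl, padicNorm.neg, padicNorm.one]
  have habs : |x| = (m : ℚ) * 2 ^ E2 * 3 ^ E3 := by
    rw [hx, abs_mul, abs_mul, abs_mul]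
    rcases hs with rfl | rfl <;>
      rw [abs_of_nonneg (by positivity : (0:ℚ) ≤ 2 ^ E2),
        abs_of_nonneg (by positivity : (0:ℚ) ≤ 3 ^ E3)] <;> simp
  have hn2 : padicNorm 2 x = (2 : ℚ)⁻¹ ^ E2 := by
    rw [hx, padicNorm.mul, padicNorm.mul, padicNorm.mul, hnorm 2,
      padicNorm_zpow, padicNorm_zpow]
    have hm : padicNorm 2 (m : ℚ) = 1 := (padicNorm.nat_eq_one_iff (p := 2) m).mpr hm2
    have hp2 : padicNorm 2 (2 : ℚ) = (2:ℚ)⁻¹ := by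
      have := padicNorm.padicNorm_p (p := 2) (by norm_num)
      simpa using this
    have hp3 : padicNorm 2 (3 : ℚ) = 1 := by
      have := (padicNorm.nat_eq_one_iff (p := 2) 3).mpr (by norm_num)
      simpa using this
    rw [hm, hp2, hp3, one_mul, one_mul, one_zpow, mul_one]
  have hn3 : padicNorm 3 x = (3 : ℚ)⁻¹ ^ E3 := by
    rw [hx, padicNorm.mul, padicNorm.mul, padicNorm.mul, hnorm 3,
      padicNorm_zpow, padicNorm_zpow]
    have hm : padicNorm 3 (m : ℚ) = 1 := (padicNorm.nat_eq_one_iff (p := 3) m).mpr hm3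
    have hp3 : padicNorm 3 (3 : ℚ) = (3:ℚ)⁻¹ := by
      have := padicNorm.padicNorm_p (p := 3) (by norm_num)
      simpa using this
    have hp2 : padicNorm 3 (2 : ℚ) = 1 := by
      have := (padicNorm.nat_eq_one_iff (p := 3) 2).mpr (by norm_num)
      simpa using this
    rw [hm, hp3, hp2, one_mul, one_mul, one_zpow, one_mul]
  rw [habs, hn2, hn3, inv_zpow, inv_zpow]
  field_simp


end CardQuotAux

open CardQuotAux

/-- For `r = 2^{n₁}3^{n₂}` with `(n₁,n₂) ∈ ℤ²`, `n₁n₂ ≠ 0`, the quotient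
`ℤ[1/6]/(r-1)ℤ[1/6]` (with `ℤ[1/6]` the subring of `ℚ` generated by `1/6`) is a
finite group of cardinality `|r-1|_∞ |r-1|_2 |r-1|_3`. -/
theorem card_quotient_z_one_sixth (n₁ n₂ : ℤ) (h : n₁ * n₂ ≠ 0)
    (r : Subring.closure {(6 : ℚ)⁻¹})
    (hr : (r : ℚ) = (2 : ℚ) ^ n₁ * (3 : ℚ) ^ n₂) :
    Finite ((Subring.closure {(6 : ℚ)⁻¹}) ⧸ Ideal.span {r - 1}) ∧
    ((Nat.card ((Subring.closure {(6 : ℚ)⁻¹}) ⧸ Ideal.span {r - 1}) : ℚ) =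
      |(r : ℚ) - 1| * padicNorm 2 ((r : ℚ) - 1) * padicNorm 3 ((r : ℚ) - 1)) := by
  have hn1 : n₁ ≠ 0 := fun h0 => h (by rw [h0, zero_mul])
  have hn2 : n₂ ≠ 0 := fun h0 => h (by rw [h0, mul_zero])
  set p₁ := n₁.toNat with hp₁
  set a₁ := (-n₁).toNat with ha₁
  set p₂ := n₂.toNat with hp₂
  set b₁ := (-n₂).toNat with hb₁
  set N : ℤ := 2 ^ p₁ * 3 ^ p₂ - 2 ^ a₁ * 3 ^ b₁ with hNdef
  have h2pow : (2:ℚ) ^ n₁ * (2:ℚ) ^ (a₁:ℤ) = (2:ℚ) ^ (p₁:ℤ) := by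
    rw [← zpow_add₀ two_ne_zero]; congr 1; omega
  have h3pow : (3:ℚ) ^ n₂ * (3:ℚ) ^ (b₁:ℤ) = (3:ℚ) ^ (p₂:ℤ) := by
    rw [← zpow_add₀ three_ne_zero]; congr 1; omega
  have hcastN : ((N:ℤ):ℚ) = (2:ℚ)^(p₁:ℤ)*(3:ℚ)^(p₂:ℤ) - (2:ℚ)^(a₁:ℤ)*(3:ℚ)^(b₁:ℤ) := by
    rw [hNdef]; push_cast
    rw [zpow_natCast, zpow_natCast, zpow_natCast, zpow_natCast]
  have hrN : ((r:ℚ) - 1) * ((2:ℚ) ^ (a₁:ℤ) * (3:ℚ) ^ (b₁:ℤ)) = (N:ℚ) := by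
    rw [hr, hcastN]
    linear_combination ((3:ℚ)^n₂ * (3:ℚ)^(b₁:ℤ)) * h2pow + (2:ℚ)^(p₁:ℤ) * h3pow
  have hN0 : N ≠ 0 := by
    intro h0
    have hZ : (2:ℤ) ^ p₁ * 3 ^ p₂ = 2 ^ a₁ * 3 ^ b₁ := by
      have := sub_eq_zero.mp (hNdef ▸ h0)
      linarith [this]
    have hnat : (2 ^ p₁ * 3 ^ p₂ : ℕ) = 2 ^ a₁ * 3 ^ b₁ := by exact_mod_cast hZ
    have e1 : ((2:ℕ) ^ p₁ * 3 ^ p₂).factorization 2 = p₁ := by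
      rw [Nat.factorization_mul (pow_ne_zero _ (by norm_num)) (pow_ne_zero _ (by norm_num)),
        Nat.Prime.factorization_pow Nat.prime_two, Nat.Prime.factorization_pow Nat.prime_three]
      simp [Finsupp.single_apply]
    have e2 : ((2:ℕ) ^ a₁ * 3 ^ b₁).factorization 2 = a₁ := by
      rw [Nat.factorization_mul (pow_ne_zero _ (by norm_num)) (pow_ne_zero _ (by norm_num)),
        Nat.Prime.factorization_pow Nat.prime_two, Nat.Prime.factorization_pow Nat.prime_three]
      simp [Finsupp.single_apply]
    rw [hnat, e2] at e1
    omega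
  set M : ℕ := N.natAbs with hMdef
  have hM0 : M ≠ 0 := Int.natAbs_ne_zero.mpr hN0
  set v2 := M.factorization 2 with hv2
  set M1 := M / 2 ^ v2 with hM1def
  have hMsplit : 2 ^ v2 * M1 = M := Nat.ordProj_mul_ordCompl_eq_self M 2
  set v3 := M1.factorization 3 with hv3
  set m := M1 / 3 ^ v3 with hmdef
  have hM1split : 3 ^ v3 * m = M1 := Nat.ordProj_mul_ordCompl_eq_self M1 3
  have hM1ne : M1 ≠ 0 := (Nat.ordCompl_pos 2 hM0).ne'
  have hmne : m ≠ 0 := (Nat.ordCompl_pos 3 hM1ne).ne'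
  have h3m : ¬ 3 ∣ m := Nat.not_dvd_ordCompl Nat.prime_three hM1ne
  have h2M1 : ¬ 2 ∣ M1 := Nat.not_dvd_ordCompl Nat.prime_two hM0
  have h2m : ¬ 2 ∣ m := fun hd => h2M1 (hd.trans ⟨3 ^ v3, by rw [← hM1split]; ring⟩)
  set s : ℚ := if N < 0 then -1 else 1 with hsdef
  have hsor : s = 1 ∨ s = -1 := by
    rw [hsdef]; split <;> simp
  have hsign : ((N:ℤ):ℚ) = s * M := by
    have habs : ((M:ℕ):ℚ) = |(N:ℚ)| := by
      rw [hMdef, Nat.cast_natAbs, Int.cast_abs]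
    by_cases hneg : N < 0
    · rw [hsdef, if_pos hneg, habs, abs_of_neg (by exact_mod_cast hneg : ((N:ℤ):ℚ) < 0)]
      ring
    · rw [hsdef, if_neg hneg, habs,
        abs_of_nonneg (by exact_mod_cast not_lt.mp hneg : (0:ℚ) ≤ ((N:ℤ):ℚ))]
      ring
  set E2 : ℤ := (v2:ℤ) - a₁ with hE2
  set E3 : ℤ := (v3:ℤ) - b₁ with hE3
  have hMQ : ((M:ℕ):ℚ) = (2:ℚ)^(v2:ℤ) * ((3:ℚ)^(v3:ℤ) * (m:ℚ)) := by
    rw [← hMsplit, ← hM1split]; push_cast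
    rw [zpow_natCast, zpow_natCast]
  have hx : (r:ℚ) - 1 = s * m * 2 ^ E2 * 3 ^ E3 := by
    have hden : ((2:ℚ) ^ (a₁:ℤ) * (3:ℚ) ^ (b₁:ℤ)) ≠ 0 := by positivity
    apply mul_right_cancel₀ hden
    rw [hrN, hsign, hMQ]
    have g2 : (2:ℚ)^E2 * (2:ℚ)^(a₁:ℤ) = (2:ℚ)^(v2:ℤ) := by
      rw [← zpow_add₀ two_ne_zero]; congr 1; omega
    have g3 : (3:ℚ)^E3 * (3:ℚ)^(b₁:ℤ) = (3:ℚ)^(v3:ℤ) := by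
      rw [← zpow_add₀ three_ne_zero]; congr 1; omega
    linear_combination (-(s*(m:ℚ)*(3:ℚ)^E3*(3:ℚ)^(b₁:ℤ))) * g2 + (-(s*(m:ℚ)*(2:ℚ)^(v2:ℤ))) * g3
  have hRHS : |(r:ℚ) - 1| * padicNorm 2 ((r:ℚ) - 1) * padicNorm 3 ((r:ℚ) - 1) = m :=
    norm_product h2m h3m hsor hx
  -- the unit
  haveI : NeZero m := ⟨hmne⟩
  set f : R →* ℚ := (Subring.subtype R).toMonoidHom with hf
  set u2 : Rˣ := isUnit_two.unit with hu2
  set u3 : Rˣ := isUnit_three.unit with hu3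
  set su : Rˣ := if N < 0 then -1 else 1 with hsu
  have hsuc : ((su : R) : ℚ) = s := by
    rw [hsu, hsdef]
    split <;> simp
  have coe_zpow : ∀ (u : Rˣ) (e : ℤ), (((u ^ e : Rˣ) : R) : ℚ) = (((u : R) : ℚ)) ^ e := by
    intro u e
    have h1 : (((u ^ e : Rˣ) : R) : ℚ) = ((Units.map f (u ^ e) : ℚˣ) : ℚ) := rfl
    rw [h1, map_zpow, Units.val_zpow_eq_zpow_val]
    rfl
  set U : Rˣ := su * u2 ^ E2 * u3 ^ E3 with hU
  have hUc : ((U : R) : ℚ) = s * 2 ^ E2 * 3 ^ E3 := by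
    rw [hU]
    push_cast [Units.val_mul]
    rw [coe_zpow, coe_zpow, hsuc, hu2, hu3, IsUnit.unit_spec, IsUnit.unit_spec,
      show ((2:R):ℚ) = 2 from by norm_cast, show ((3:R):ℚ) = 3 from by norm_cast]
  have hUeq : ((m:ℕ) : R) * (U : R) = r - 1 := by
    refine Subtype.ext ?_
    push_cast
    rw [hUc, hx]
    push_cast
    ring
  have hassoc : Associated (((m:ℕ) : R)) (r - 1) := ⟨U, hUeq⟩
  have hspan : Ideal.span {r - 1} = Ideal.span {((m:ℕ) : R)} :=
    (Ideal.span_singleton_eq_span_singleton.mpr hassoc).symm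
  obtain ⟨e⟩ := key m hmne h2m h3m
  rw [hspan]
  constructor
  · exact Finite.of_equiv _ e.symm.toEquiv
  · rw [Nat.card_congr e.toEquiv, Nat.card_zmod]
    exact hRHS.symm
end

section
/- In the Ledrappier system, corresponding to the module M = 𝔽₂[t^{±1},(1+t)^{±1}] over R_2 via u₁ ↦ t, u₂ ↦ 1+t, the number of fixed points of α^{(n₁,n₂)} (when finite) equals |t^{n₁}(1+t)^{n₂} − 1|_∞ · |t^{n₁}(1+t)^{n₂} − 1|_t · |t^{n₁}(1+t)^{n₂} − 1|_{1+t}, where the three absolute values on 𝔽₂(t) are |r(t)|_t = 2^{−ord_t(r)}, |r(t)|_{1+t} = 2^{−ord_{1+t}(r)}, and |r(t)|_∞ = |r(t^{−1})|_t. -/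
open Polynomial

namespace LedrappierAux

abbrev F := ZMod 2
abbrev A := Polynomial F
abbrev K := RatFunc F

noncomputable abbrev M : Subring K :=
  Subring.closure {RatFunc.X, RatFunc.X⁻¹, ((1 : RatFunc (ZMod 2)) + RatFunc.X)⁻¹}

theorem hXC : (Polynomial.X - Polynomial.C (1:F)) = Polynomial.X + 1 := by
  rw [sub_eq_add_neg, ← Polynomial.C_neg, show (-1:F) = 1 by decide, Polynomial.C_1]

theorem poly_mem (p : A) : algebraMap A K p ∈ M := by
  induction p using Polynomial.induction_on' with
  | add p q hp hq => rw [map_add]; exact M.add_mem hp hq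
  | monomial n a =>
    rcases (by revert a; decide : a = 0 ∨ a = 1) with h | h <;> subst h
    · simp only [Polynomial.monomial_zero_right, map_zero]; exact M.zero_mem
    · rw [← Polynomial.C_mul_X_pow_eq_monomial, Polynomial.C_1, one_mul, map_pow,
        RatFunc.algebraMap_X]
      exact M.pow_mem (Subring.subset_closure (by simp)) n

theorem X_ne : (RatFunc.X : K) ≠ 0 := RatFunc.X_ne_zero

theorem oneX_ne : ((1:K) + RatFunc.X) ≠ 0 := by
  have : ((1:K) + RatFunc.X) = algebraMap A K (Polynomial.X + 1) := by
    rw [map_add, map_one, RatFunc.algebraMap_X]; ring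
  rw [this, ne_eq, map_eq_zero_iff _ (RatFunc.algebraMap_injective F)]
  intro h
  simpa using congrArg (Polynomial.eval 0) h

theorem clear_denom (y : K) (hy : y ∈ M) :
    ∃ (a b : ℕ) (p : A),
      y * algebraMap A K (Polynomial.X ^ a * (Polynomial.X + 1) ^ b) = algebraMap A K p := by
  induction hy using Subring.closure_induction with
  | mem z hz =>
    rcases hz with h | h | h
    · exact ⟨0, 0, Polynomial.X, by simp [h, RatFunc.algebraMap_X]⟩
    · refine ⟨1, 0, 1, ?_⟩
      simp only [h, pow_one, pow_zero, mul_one, map_one, RatFunc.algebraMap_X]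
      rw [inv_mul_cancel₀ X_ne]
    · refine ⟨0, 1, 1, ?_⟩
      simp only [Set.mem_singleton_iff] at h
      subst h
      simp only [pow_one, pow_zero, one_mul, map_one, map_add, RatFunc.algebraMap_X]
      rw [show (RatFunc.X:K) + 1 = 1 + RatFunc.X by ring, inv_mul_cancel₀ oneX_ne]
  | zero => exact ⟨0, 0, 0, by simp⟩
  | one => exact ⟨0, 0, 1, by simp⟩
  | add u v hu hv h1 h2 =>
    obtain ⟨a1, b1, p1, e1⟩ := h1; obtain ⟨a2, b2, p2, e2⟩ := h2
    refine ⟨a1 + a2, b1 + b2, p1 * (Polynomial.X ^ a2 * (Polynomial.X+1) ^ b2)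
      + p2 * (Polynomial.X ^ a1 * (Polynomial.X+1) ^ b1), ?_⟩
    simp only [map_mul, map_pow, map_add, map_one] at e1 e2 ⊢
    linear_combination ((algebraMap A K Polynomial.X) ^ a2
        * ((algebraMap A K Polynomial.X) + 1) ^ b2) * e1
      + ((algebraMap A K Polynomial.X) ^ a1 * ((algebraMap A K Polynomial.X) + 1) ^ b1) * e2
  | neg _ _ h1 =>
    obtain ⟨a, b, p, e⟩ := h1
    exact ⟨a, b, -p, by rw [map_neg, ← e]; ring⟩
  | mul u v hu hv h1 h2 =>
    obtain ⟨a1, b1, p1, e1⟩ := h1; obtain ⟨a2, b2, p2, e2⟩ := h2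
    refine ⟨a1 + a2, b1 + b2, p1 * p2, ?_⟩
    simp only [map_mul, map_pow, map_add, map_one] at e1 e2 ⊢
    linear_combination (v * ((algebraMap A K Polynomial.X) ^ a2
        * ((algebraMap A K Polynomial.X) + 1) ^ b2)) * e1
      + (algebraMap A K p1) * e2

theorem decomp {p : A} (hp : p ≠ 0) :
    ∃ q : A, p = Polynomial.X ^ (p.rootMultiplicity 0) * (Polynomial.X + 1) ^ (p.rootMultiplicity 1) * q
      ∧ q.eval 0 ≠ 0 ∧ q.eval 1 ≠ 0 := by
  set c := p.rootMultiplicity 0 with hc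
  have h0 := Polynomial.pow_mul_divByMonic_rootMultiplicity_eq p 0
  rw [Polynomial.C_0, sub_zero] at h0
  set r := p /ₘ (Polynomial.X ^ c) with hr
  have hre : Polynomial.X ^ c * r = p := by
    exact h0
  have hr0 : r.eval 0 ≠ 0 := by
    have := Polynomial.eval_divByMonic_pow_rootMultiplicity_ne_zero 0 hp
    rwa [Polynomial.C_0, sub_zero] at this
  have hrne : r ≠ 0 := fun h => hr0 (by simp [h])
  have hmul1 : p.rootMultiplicity 1 = r.rootMultiplicity 1 := by
    rw [← hre, Polynomial.rootMultiplicity_mul (hre.symm ▸ hp)]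
    have : (Polynomial.X ^ c : A).rootMultiplicity 1 = 0 :=
      Polynomial.rootMultiplicity_eq_zero (by simp [Polynomial.IsRoot])
    omega
  set d := r.rootMultiplicity 1 with hd
  have h1 := Polynomial.pow_mul_divByMonic_rootMultiplicity_eq r 1
  set q := r /ₘ ((Polynomial.X - Polynomial.C 1) ^ d) with hq
  have hq1 : q.eval 1 ≠ 0 := Polynomial.eval_divByMonic_pow_rootMultiplicity_ne_zero 1 hrne
  have hqe : (Polynomial.X + 1) ^ d * q = r := by rw [← hXC]; exact h1
  have hq0 : q.eval 0 ≠ 0 := by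
    intro h
    apply hr0
    rw [← hqe]
    simp [h]
  refine ⟨q, ?_, hq0, hq1⟩
  rw [hmul1, ← hre, ← hqe]; ring

theorem coprime_S {q : A} (h0 : q.eval 0 ≠ 0) (h1 : q.eval 1 ≠ 0) (e f : ℕ) :
    IsCoprime (Polynomial.X ^ e * (Polynomial.X + 1) ^ f) q := by
  have hX : IsCoprime (Polynomial.X : A) q :=
    (Polynomial.irreducible_X).coprime_iff_not_dvd.mpr (by
      rw [Polynomial.X_dvd_iff, Polynomial.coeff_zero_eq_eval_zero]; exact h0)
  have hY : IsCoprime (Polynomial.X + 1 : A) q := by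
    rw [← hXC]
    exact (Polynomial.irreducible_X_sub_C (1:F)).coprime_iff_not_dvd.mpr (by
      rw [Polynomial.dvd_iff_isRoot]; exact h1)
  exact (hX.pow_left).mul_left (hY.pow_left)

theorem monic_dvd_S {p : A} (hmon : p.Monic) {e f : ℕ}
    (hdvd : p ∣ Polynomial.X ^ e * (Polynomial.X + 1) ^ f) :
    p = Polynomial.X ^ (p.rootMultiplicity 0) * (Polynomial.X + 1) ^ (p.rootMultiplicity 1) := by
  obtain ⟨w, hw, hw0, hw1⟩ := decomp hmon.ne_zero
  have hwdvd : w ∣ Polynomial.X ^ e * (Polynomial.X + 1) ^ f :=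
    dvd_trans (Dvd.intro_left _ hw.symm) hdvd
  have hwmon : w.Monic := by
    have hm2 : (Polynomial.X ^ (p.rootMultiplicity 0) * (Polynomial.X + 1) ^ (p.rootMultiplicity 1) : A).Monic :=
      (Polynomial.monic_X.pow _).mul (by rw [← Polynomial.C_1]; exact (Polynomial.monic_X_add_C 1).pow _)
    exact hm2.of_mul_monic_left (hw ▸ hmon)
  have : w = 1 := hwmon.eq_one_of_isUnit
    ((coprime_S hw0 hw1 e f).isUnit_of_dvd' hwdvd dvd_rfl)
  conv_lhs => rw [hw, this, mul_one]

theorem zpow_mem {u : K} (hu : u ∈ M) (hui : u⁻¹ ∈ M) : ∀ n : ℤ, u ^ n ∈ M := by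
  intro n
  cases n with
  | ofNat k => simpa using M.pow_mem hu k
  | negSucc k =>
    rw [zpow_negSucc, ← inv_pow]
    exact M.pow_mem hui (k+1)

theorem oneX_mem : ((1:K) + RatFunc.X) ∈ M :=
  M.add_mem M.one_mem (Subring.subset_closure (by simp))

theorem card_quot {q : A} (hq : q.Monic) :
    Nat.card (A ⧸ Ideal.span {q}) = 2 ^ q.natDegree := by
  rw [show (A ⧸ Ideal.span {q}) = AdjoinRoot q from rfl,
    Nat.card_congr (AdjoinRoot.powerBasis' hq).basis.equivFun.toEquiv]
  simp [Nat.card_eq_fintype_card]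

theorem zmod2_ne_zero : ∀ z : ZMod 2, z ≠ 0 → z = 1 := by decide

end LedrappierAux

open LedrappierAux

set_option maxHeartbeats 2000000

/-- In the Ledrappier system, corresponding to the module
`M = 𝔽₂[t^{±1},(1+t)^{±1}]` (realized as the subring of `𝔽₂(t)` generated by
`t`, `t⁻¹` and `(1+t)⁻¹`), the number of fixed points of `α^{(n₁,n₂)}` — the
cardinality of `M/(t^{n₁}(1+t)^{n₂}-1)M` — equals, when finite,
`|x|_∞ · |x|_t · |x|_{1+t}` for `x = t^{n₁}(1+t)^{n₂}-1`, where
`|r|_t = 2^{-ord_t r}`, `|r|_{1+t} = 2^{-ord_{1+t} r}` (with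
`ord_g r = ord_g (num r) - ord_g (denom r)`) and `|r|_∞ = 2^{intDegree r}`. -/
theorem ledrappier_fixed_point_formula [Fact (Nat.Prime 2)]
    (n₁ n₂ : ℤ) (x : RatFunc (ZMod 2))
    (hx : x = RatFunc.X ^ n₁ * (1 + RatFunc.X) ^ n₂ - 1) (hx0 : x ≠ 0)
    (m : Subring.closure {RatFunc.X, RatFunc.X⁻¹, ((1 : RatFunc (ZMod 2)) + RatFunc.X)⁻¹})
    (hm : (m : RatFunc (ZMod 2)) = x)
    (hfin : Finite
      ((Subring.closure {RatFunc.X, RatFunc.X⁻¹, ((1 : RatFunc (ZMod 2)) + RatFunc.X)⁻¹})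
        ⧸ Ideal.span {m})) :
    ((Nat.card
      ((Subring.closure {RatFunc.X, RatFunc.X⁻¹, ((1 : RatFunc (ZMod 2)) + RatFunc.X)⁻¹})
        ⧸ Ideal.span {m}) : ℚ) =
      (2 : ℚ) ^ x.intDegree
        * (2 : ℚ) ^ (-((x.num.rootMultiplicity 0 : ℤ) - (x.denom.rootMultiplicity 0 : ℤ)))
        * (2 : ℚ) ^ (-((x.num.rootMultiplicity 1 : ℤ) - (x.denom.rootMultiplicity 1 : ℤ)))) := by
  classical
  set a := x.num.rootMultiplicity 0
  set b := x.num.rootMultiplicity 1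
  set c := x.denom.rootMultiplicity 0
  set d := x.denom.rootMultiplicity 1
  have xM : x ∈ M := hm ▸ m.2
  -- denominators of x are supported at X, X+1
  obtain ⟨e, f, p, hclear⟩ := clear_denom x xM
  have hsA : (Polynomial.X ^ e * (Polynomial.X + 1) ^ f : A) ≠ 0 := by
    refine mul_ne_zero (pow_ne_zero _ Polynomial.X_ne_zero) (pow_ne_zero _ ?_)
    rw [← Polynomial.C_1]
    exact (Polynomial.monic_X_add_C (1:F)).ne_zero
  have hsK : algebraMap A K (Polynomial.X ^ e * (Polynomial.X + 1) ^ f) ≠ 0 := by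
    rwa [ne_eq, map_eq_zero_iff _ (RatFunc.algebraMap_injective F)]
  have hdenom_dvd : x.denom ∣ (Polynomial.X ^ e * (Polynomial.X + 1) ^ f) :=
    (RatFunc.denom_dvd hsA).mpr ⟨p, by rw [eq_div_iff hsK]; exact hclear⟩
  have hden : x.denom = Polynomial.X ^ c * (Polynomial.X + 1) ^ d :=
    monic_dvd_S (RatFunc.monic_denom x) hdenom_dvd
  -- factor num
  have hnum0 : x.num ≠ 0 := RatFunc.num_ne_zero hx0
  obtain ⟨q, hnum, hq0, hq1⟩ := decomp hnum0
  have hqmon : q.Monic := by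
    have hnummon : x.num.Monic := by
      have h1 : x.num.leadingCoeff ≠ 0 := Polynomial.leadingCoeff_ne_zero.mpr hnum0
      exact zmod2_ne_zero _ h1
    have hm2 : (Polynomial.X ^ a * (Polynomial.X + 1) ^ b : A).Monic :=
      (Polynomial.monic_X.pow _).mul (by rw [← Polynomial.C_1]; exact (Polynomial.monic_X_add_C 1).pow _)
    exact hm2.of_mul_monic_left (hnum ▸ hnummon)
  have hqA0 : q ≠ 0 := hqmon.ne_zero
  -- x = q * unit
  have hAX : algebraMap A K Polynomial.X ≠ 0 := by
    rw [ne_eq, map_eq_zero_iff _ (RatFunc.algebraMap_injective F)]; exact Polynomial.X_ne_zero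
  have hAY : algebraMap A K (Polynomial.X + 1) ≠ 0 := by
    rw [ne_eq, map_eq_zero_iff _ (RatFunc.algebraMap_injective F), ← Polynomial.C_1]
    exact (Polynomial.monic_X_add_C (1:F)).ne_zero
  set z : K := (algebraMap A K Polynomial.X) ^ ((a:ℤ) - c)
      * (algebraMap A K (Polynomial.X + 1)) ^ ((b:ℤ) - d) with hzdef
  have hxz : x = algebraMap A K q * z := by
    conv_lhs => rw [← RatFunc.num_div_denom x, hnum, hden]
    rw [hzdef, zpow_sub₀ hAX, zpow_sub₀ hAY]
    simp only [map_mul, map_pow, zpow_natCast]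
    field_simp
    ring
  have hz0 : z ≠ 0 := mul_ne_zero (zpow_ne_zero _ hAX) (zpow_ne_zero _ hAY)
  have hXmem : ∀ n : ℤ, (algebraMap A K Polynomial.X) ^ n ∈ M := by
    rw [RatFunc.algebraMap_X]
    exact zpow_mem (Subring.subset_closure (by simp)) (Subring.subset_closure (by simp))
  have hYval : algebraMap A K (Polynomial.X + 1) = (1:K) + RatFunc.X := by
    rw [map_add, map_one, RatFunc.algebraMap_X]; ring
  have hYmem : ∀ n : ℤ, (algebraMap A K (Polynomial.X + 1)) ^ n ∈ M := by
    rw [hYval]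
    exact zpow_mem oneX_mem (Subring.subset_closure (by simp))
  have hz : z ∈ M := M.mul_mem (hXmem _) (hYmem _)
  have hzi : z⁻¹ ∈ M := by
    rw [hzdef, mul_inv, ← zpow_neg, ← zpow_neg]
    exact M.mul_mem (hXmem _) (hYmem _)
  set qM : M := ⟨algebraMap A K q, poly_mem q⟩ with hqM
  -- span {m} = span {qM}
  have hspan : Ideal.span {m} = Ideal.span {qM} := by
    apply le_antisymm
    · rw [Ideal.span_singleton_le_span_singleton]
      exact ⟨⟨z, hz⟩, Subtype.ext (by rw [hm]; exact hxz)⟩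
    · rw [Ideal.span_singleton_le_span_singleton]
      refine ⟨⟨z⁻¹, hzi⟩, Subtype.ext ?_⟩
      push_cast
      rw [hm, hxz, mul_assoc, mul_inv_cancel₀ hz0, mul_one]
  -- the ring hom A → M ⧸ (qM)
  set toM : A →+* M := (algebraMap A K).codRestrict M.toSubsemiring poly_mem with htoM
  have htoM_val : ∀ p : A, (toM p : K) = algebraMap A K p := fun _ => rfl
  set ψ : A →+* (M ⧸ Ideal.span {qM}) := (Ideal.Quotient.mk (Ideal.span {qM})).comp toM with hψ
  have hψsurj : Function.Surjective ψ := by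
    intro t
    obtain ⟨⟨y, hy⟩, rfl⟩ := Ideal.Quotient.mk_surjective t
    obtain ⟨e', f', p', hp'⟩ := clear_denom y hy
    obtain ⟨w, v, hwv⟩ := coprime_S hq0 hq1 e' f'
    refine ⟨w * p', ?_⟩
    rw [hψ, RingHom.comp_apply, Ideal.Quotient.eq]
    refine Ideal.mem_span_singleton.mpr ⟨-(⟨y, hy⟩ * toM v), Subtype.ext ?_⟩
    push_cast
    simp only [htoM_val]
    have hwv' : algebraMap A K w * algebraMap A K (Polynomial.X ^ e' * (Polynomial.X + 1) ^ f')
        + algebraMap A K v * algebraMap A K q = 1 := by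
      rw [← map_mul, ← map_mul, ← map_add, hwv, map_one]
    rw [map_mul]
    linear_combination y * hwv' - (algebraMap A K w) * hp'
  have hψker : RingHom.ker ψ = Ideal.span {q} := by
    ext p''
    rw [RingHom.mem_ker, hψ, RingHom.comp_apply, Ideal.Quotient.eq_zero_iff_mem,
      Ideal.mem_span_singleton, Ideal.mem_span_singleton]
    constructor
    · rintro ⟨r, hrel⟩
      obtain ⟨e', f', p₂, h₂⟩ := clear_denom r.1 r.2
      have hval : algebraMap A K p'' = algebraMap A K q * (r : K) :=
        congrArg Subtype.val hrel
      have heq : p'' * (Polynomial.X ^ e' * (Polynomial.X + 1) ^ f') = q * p₂ := by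
        apply RatFunc.algebraMap_injective _
        simp only [map_mul, map_pow] at h₂ hval ⊢
        linear_combination ((algebraMap A K Polynomial.X) ^ e'
            * (algebraMap A K (Polynomial.X + 1)) ^ f') * hval + (algebraMap A K q) * h₂
      exact ((coprime_S hq0 hq1 e' f').symm).dvd_of_dvd_mul_right ⟨p₂, heq⟩
    · rintro ⟨t, rfl⟩
      refine ⟨toM t, Subtype.ext ?_⟩
      show algebraMap A K (q * t) = algebraMap A K q * algebraMap A K t
      rw [map_mul]
  have hcard : Nat.card ((M : Subring K) ⧸ Ideal.span {m}) = 2 ^ q.natDegree := by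
    rw [hspan]
    have equiv := RingHom.quotientKerEquivOfSurjective hψsurj
    rw [← Nat.card_congr equiv.toEquiv, hψker, card_quot hqmon]
  -- arithmetic
  have hdeg_num : x.num.natDegree = a + b + q.natDegree := by
    rw [hnum]
    rw [Polynomial.natDegree_mul (mul_ne_zero (pow_ne_zero _ Polynomial.X_ne_zero) (pow_ne_zero _ (by rw [← Polynomial.C_1]; exact (Polynomial.monic_X_add_C (1:F)).ne_zero))) hqA0, Polynomial.natDegree_mul
      (pow_ne_zero _ Polynomial.X_ne_zero) (pow_ne_zero _ (by rw [← Polynomial.C_1]; exact (Polynomial.monic_X_add_C (1:F)).ne_zero))]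
    rw [Polynomial.natDegree_pow, Polynomial.natDegree_pow, Polynomial.natDegree_X,
      ← Polynomial.C_1, Polynomial.natDegree_X_add_C]
    ring
  have hdeg_den : x.denom.natDegree = c + d := by
    rw [hden]
    rw [Polynomial.natDegree_mul (pow_ne_zero _ Polynomial.X_ne_zero)
      (pow_ne_zero _ (by rw [← Polynomial.C_1]; exact (Polynomial.monic_X_add_C (1:F)).ne_zero))]
    rw [Polynomial.natDegree_pow, Polynomial.natDegree_pow, Polynomial.natDegree_X,
      ← Polynomial.C_1, Polynomial.natDegree_X_add_C]
    ring
  rw [hcard]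
  rw [Nat.cast_pow, Nat.cast_ofNat, ← zpow_natCast (2:ℚ) q.natDegree, ← zpow_add₀ (by norm_num : (2:ℚ) ≠ 0),
    ← zpow_add₀ (by norm_num : (2:ℚ) ≠ 0)]
  push_cast
  congr 1
  rw [RatFunc.intDegree, hdeg_num, hdeg_den]
  push_cast
  ring
end

section
/- For the Ledrappier system, in the expansive region n₁ < 0, n₂ > 0, n₁ + n₂ > 0, one has |t^{n₁}(1+t)^{n₂} − 1|_t = 2^{−n₁}, |t^{n₁}(1+t)^{n₂} − 1|_∞ = 2^{n₁+n₂}, |t^{n₁}(1+t)^{n₂} − 1|_{1+t} = 1, and hence the number of points fixed by α^{(n₁,n₂)} equals 2^{n₂}. -/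
open Polynomial

noncomputable section LedrappierAux

/-! ### Auxiliary lemmas -/

lemma ledr_unit_eq_one (u : (ZMod 2)[X]) (h : IsUnit u) : u = 1 := by
  obtain ⟨r, hr, hC⟩ := Polynomial.isUnit_iff.mp h
  have hr1 : r = 1 := by
    have : ∀ s : ZMod 2, s ≠ 0 → s = 1 := by decide
    exact this r hr.ne_zero
  rw [← hC, hr1, map_one]

lemma ledr_num_denom_of {p q : (ZMod 2)[X]} (hp : p ≠ 0) (hq : q.Monic) (h : IsCoprime p q) :
    (algebraMap (ZMod 2)[X] (RatFunc (ZMod 2)) p / algebraMap _ _ q).num = p ∧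
    (algebraMap (ZMod 2)[X] (RatFunc (ZMod 2)) p / algebraMap _ _ q).denom = q := by
  set y := algebraMap (ZMod 2)[X] (RatFunc (ZMod 2)) p / algebraMap _ _ q with hy
  have hkey : y.num * q = p * y.denom := (RatFunc.num_mul_eq_mul_denom_iff hq.ne_zero).mpr hy
  have hcop := y.isCoprime_num_denom
  have h1 : y.num ∣ p := hcop.dvd_of_dvd_mul_right (hkey ▸ Dvd.intro q rfl)
  have h2 : p ∣ y.num := h.dvd_of_dvd_mul_right (Dvd.intro y.denom hkey.symm)
  obtain ⟨u, he⟩ := (associated_of_dvd_dvd h2 h1)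
  have hnum : y.num = p := by
    rw [← he, ledr_unit_eq_one u u.isUnit, mul_one]
  refine ⟨hnum, ?_⟩
  rw [hnum] at hkey
  exact (mul_left_cancel₀ hp hkey.symm)

/-- The numerator polynomial `(1+X)^b - X^a`. -/
noncomputable def ledrP (a b : ℕ) : (ZMod 2)[X] := (1 + X) ^ b - X ^ a

section PolyFacts

variable (a b : ℕ)

lemma ledr_one_add_X_eq : (1 + X : (ZMod 2)[X]) = X - C 1 := by
  rw [sub_eq_add_neg, ← map_neg C, show (-1 : ZMod 2) = 1 by decide, map_one, add_comm]

lemma ledrP_eval0 (ha : 1 ≤ a) : (ledrP a b).eval 0 = 1 := by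
  simp [ledrP, zero_pow (by omega : a ≠ 0)]

lemma ledrP_eval1 (hb : 1 ≤ b) : (ledrP a b).eval 1 = 1 := by
  have h2 : (1 + 1 : ZMod 2) = 0 := by decide
  simp [ledrP, h2, zero_pow (by omega : b ≠ 0)]

lemma ledrP_ne_zero (ha : 1 ≤ a) : ledrP a b ≠ 0 := fun h => by
  simpa [h] using ledrP_eval0 a b ha

lemma ledrP_natDegree (hab : a < b) : (ledrP a b).natDegree = b := by
  have h1 : ((1 + X : (ZMod 2)[X]) ^ b).natDegree = b := by
    rw [natDegree_pow, show (1 + X : (ZMod 2)[X]) = X + C 1 by simp [add_comm],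
      natDegree_X_add_C, mul_one]
  rw [ledrP, natDegree_sub_eq_left_of_natDegree_lt (by rw [natDegree_X_pow, h1]; omega), h1]

lemma ledrP_coprime_X (ha : 1 ≤ a) : IsCoprime (X : (ZMod 2)[X]) (ledrP a b) := by
  have hX : Irreducible (X : (ZMod 2)[X]) := Polynomial.prime_X.irreducible
  refine hX.coprime_iff_not_dvd.mpr ?_
  rw [Polynomial.X_dvd_iff, coeff_zero_eq_eval_zero, ledrP_eval0 a b ha]
  exact one_ne_zero

lemma ledrP_coprime_one_add_X (hb : 1 ≤ b) :
    IsCoprime (1 + X : (ZMod 2)[X]) (ledrP a b) := by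
  rw [ledr_one_add_X_eq]
  refine (irreducible_X_sub_C (1 : ZMod 2)).coprime_iff_not_dvd.mpr ?_
  rw [Polynomial.dvd_iff_isRoot, IsRoot, ledrP_eval1 a b hb]
  exact one_ne_zero

end PolyFacts

/-! ### The Laurent ring `M = 𝔽₂[t^{±1}, (1+t)^{±1}]` as a subring closure -/

abbrev ledrA : Set (RatFunc (ZMod 2)) :=
  {RatFunc.X, RatFunc.X⁻¹, ((1 : RatFunc (ZMod 2)) + RatFunc.X)⁻¹}

abbrev ledrS : Subring (RatFunc (ZMod 2)) := Subring.closure ledrA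

lemma ledr_hXS : RatFunc.X ∈ ledrS := Subring.subset_closure (by left; rfl)
lemma ledr_hXiS : RatFunc.X⁻¹ ∈ ledrS := Subring.subset_closure (by right; left; rfl)
lemma ledr_hX1iS : ((1 : RatFunc (ZMod 2)) + RatFunc.X)⁻¹ ∈ ledrS :=
  Subring.subset_closure (by right; right; rfl)
lemma ledr_hX1S : (1 : RatFunc (ZMod 2)) + RatFunc.X ∈ ledrS := add_mem (one_mem _) ledr_hXS

instance : CharP (RatFunc (ZMod 2)) 2 :=
  charP_of_injective_algebraMap (algebraMap (ZMod 2) (RatFunc (ZMod 2))).injective 2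

instance : CharP ledrS 2 := CharP.subring _ 2 _

/-- Evaluation of polynomials over `𝔽₂` inside the subring `ledrS`, sending `X` to `t`. -/
noncomputable def ledrψ : (ZMod 2)[X] →+* ledrS :=
  eval₂RingHom (ZMod.castHom dvd_rfl ledrS) ⟨RatFunc.X, ledr_hXS⟩

lemma ledrψ_X : ledrψ Polynomial.X = ⟨RatFunc.X, ledr_hXS⟩ := eval₂_X _ _

lemma ledrψ_coe (f : (ZMod 2)[X]) :
    ((ledrψ f : ledrS) : RatFunc (ZMod 2)) = algebraMap _ _ f := by
  have h1 : ((ledrψ f : ledrS) : RatFunc (ZMod 2)) =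
      eval₂ ((ledrS.subtype).comp (ZMod.castHom dvd_rfl ledrS)) RatFunc.X f := by
    simpa [ledrψ] using Polynomial.hom_eval₂ f (ZMod.castHom dvd_rfl ledrS) ledrS.subtype
      ⟨RatFunc.X, ledr_hXS⟩
  rw [h1]
  have h2 : (eval₂RingHom ((ledrS.subtype).comp (ZMod.castHom dvd_rfl ledrS)) RatFunc.X) =
      algebraMap (ZMod 2)[X] (RatFunc (ZMod 2)) := by
    apply Polynomial.ringHom_ext
    · intro c
      have : ((ledrS.subtype).comp (ZMod.castHom dvd_rfl ledrS)) =
          (algebraMap (ZMod 2)[X] (RatFunc (ZMod 2))).comp Polynomial.C :=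
        Subsingleton.elim _ _
      simpa using congrFun (congrArg DFunLike.coe this) c
    · simp [RatFunc.algebraMap_X]
  exact congrFun (congrArg DFunLike.coe h2) f

lemma ledr_one_add_X_ne_zero : (1 : RatFunc (ZMod 2)) + RatFunc.X ≠ 0 := by
  have : (1 + Polynomial.X : (ZMod 2)[X]) ≠ 0 := by
    intro h
    have := congrArg (fun p => Polynomial.coeff p 1) h
    simp [Polynomial.coeff_one] at this
  simpa [map_add, RatFunc.algebraMap_X] using RatFunc.algebraMap_ne_zero this

/-- Every element of the closure is a Laurent-type quotient. -/
lemma ledr_rep {y : RatFunc (ZMod 2)} (hy : y ∈ Subring.closure ledrA) :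
    ∃ (g : (ZMod 2)[X]) (i j : ℕ),
      y * algebraMap (ZMod 2)[X] (RatFunc (ZMod 2)) (Polynomial.X ^ i * (1 + Polynomial.X) ^ j)
        = algebraMap (ZMod 2)[X] (RatFunc (ZMod 2)) g := by
  have hXne : (RatFunc.X : RatFunc (ZMod 2)) ≠ 0 := RatFunc.X_ne_zero
  have hX1ne : (1 : RatFunc (ZMod 2)) + RatFunc.X ≠ 0 := ledr_one_add_X_ne_zero
  have halg1X : algebraMap (ZMod 2)[X] (RatFunc (ZMod 2)) (1 + Polynomial.X)
      = 1 + RatFunc.X := by simp [map_add, RatFunc.algebraMap_X]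
  induction hy using Subring.closure_induction with
  | mem z hz =>
    simp only [ledrA, Set.mem_insert_iff, Set.mem_singleton_iff] at hz
    rcases hz with rfl | rfl | rfl
    · exact ⟨Polynomial.X, 0, 0, by simp [RatFunc.algebraMap_X]⟩
    · refine ⟨1, 1, 0, ?_⟩
      simp [RatFunc.algebraMap_X, inv_mul_cancel₀ hXne]
    · refine ⟨1, 0, 1, ?_⟩
      simp only [pow_zero, one_mul, pow_one, halg1X, map_one]
      exact inv_mul_cancel₀ hX1ne
  | zero => exact ⟨0, 0, 0, by simp⟩
  | one => exact ⟨1, 0, 0, by simp⟩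
  | add z w hz hw ihz ihw =>
    obtain ⟨g1, i1, j1, h1⟩ := ihz
    obtain ⟨g2, i2, j2, h2⟩ := ihw
    refine ⟨g1 * (Polynomial.X ^ i2 * (1 + Polynomial.X) ^ j2)
      + g2 * (Polynomial.X ^ i1 * (1 + Polynomial.X) ^ j1), i1 + i2, j1 + j2, ?_⟩
    simp only [map_add, map_mul, map_pow, pow_add, map_one] at *
    linear_combination (algebraMap (ZMod 2)[X] (RatFunc (ZMod 2)) Polynomial.X ^ i2 *
        (1 + algebraMap (ZMod 2)[X] (RatFunc (ZMod 2)) Polynomial.X) ^ j2) * h1 +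
      (algebraMap (ZMod 2)[X] (RatFunc (ZMod 2)) Polynomial.X ^ i1 *
        (1 + algebraMap (ZMod 2)[X] (RatFunc (ZMod 2)) Polynomial.X) ^ j1) * h2
  | neg z hz ihz =>
    obtain ⟨g, i, j, h⟩ := ihz
    exact ⟨-g, i, j, by simp only [map_neg, neg_mul]; rw [h]⟩
  | mul z w hz hw ihz ihw =>
    obtain ⟨g1, i1, j1, h1⟩ := ihz
    obtain ⟨g2, i2, j2, h2⟩ := ihw
    refine ⟨g1 * g2, i1 + i2, j1 + j2, ?_⟩
    simp only [map_add, map_mul, map_pow, pow_add, map_one] at *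
    linear_combination (w * algebraMap (ZMod 2)[X] (RatFunc (ZMod 2)) Polynomial.X ^ i2 *
        (1 + algebraMap (ZMod 2)[X] (RatFunc (ZMod 2)) Polynomial.X) ^ j2) * h1 +
      algebraMap (ZMod 2)[X] (RatFunc (ZMod 2)) g1 * h2

/-- Cardinality of the quotient by the span of `ledrP a b`. -/
lemma ledr_card_quot (a b : ℕ) (ha : 1 ≤ a) (hab : a < b) :
    Nat.card ((ZMod 2)[X] ⧸ Ideal.span {ledrP a b}) = 2 ^ b := by
  have hP0 : ledrP a b ≠ 0 := ledrP_ne_zero a b ha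
  have : Nat.card (AdjoinRoot (ledrP a b)) = 2 ^ b := by
    let pb := AdjoinRoot.powerBasis hP0
    letI : Fintype (AdjoinRoot (ledrP a b)) := Module.fintypeOfFintype pb.basis
    have h1 := Module.card_fintype pb.basis
    rw [Nat.card_eq_fintype_card, h1]
    have hdim : pb.dim = b := by
      simp only [pb, AdjoinRoot.powerBasis_dim]
      exact ledrP_natDegree a b hab
    simp [hdim, ZMod.card]
  exact this

end LedrappierAux

set_option maxHeartbeats 1000000 in
set_option synthInstance.maxHeartbeats 400000 in
/-- For the Ledrappier system, in the expansive region `n₁ < 0`, `n₂ > 0`,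
`n₁ + n₂ > 0`, one has, for `x = t^{n₁}(1+t)^{n₂} - 1 ∈ 𝔽₂(t)`:
`|x|_t = 2^{-n₁}`, `|x|_∞ = 2^{n₁+n₂}`, `|x|_{1+t} = 1`, and the number of
points fixed by `α^{(n₁,n₂)}` — the cardinality of `M/xM` for
`M = 𝔽₂[t^{±1},(1+t)^{±1}]` — equals `2^{n₂}`. Here `|r|_t = 2^{-ord_t r}`,
`|r|_{1+t} = 2^{-ord_{1+t} r}` and `|r|_∞ = 2^{intDegree r}`. -/
theorem ledrappier_expansive_region [Fact (Nat.Prime 2)]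
    (n₁ n₂ : ℤ) (h₁ : n₁ < 0) (h₂ : 0 < n₂) (h₃ : 0 < n₁ + n₂)
    (x : RatFunc (ZMod 2))
    (hx : x = RatFunc.X ^ n₁ * (1 + RatFunc.X) ^ n₂ - 1) :
    ((2 : ℚ) ^ (-((x.num.rootMultiplicity 0 : ℤ) - (x.denom.rootMultiplicity 0 : ℤ)))
        = (2 : ℚ) ^ (-n₁)) ∧
    ((2 : ℚ) ^ x.intDegree = (2 : ℚ) ^ (n₁ + n₂)) ∧
    ((2 : ℚ) ^ (-((x.num.rootMultiplicity 1 : ℤ) - (x.denom.rootMultiplicity 1 : ℤ)))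
        = 1) ∧
    (∀ m : Subring.closure
        {RatFunc.X, RatFunc.X⁻¹, ((1 : RatFunc (ZMod 2)) + RatFunc.X)⁻¹},
      (m : RatFunc (ZMod 2)) = x →
      ((Nat.card
        ((Subring.closure {RatFunc.X, RatFunc.X⁻¹, ((1 : RatFunc (ZMod 2)) + RatFunc.X)⁻¹})
          ⧸ Ideal.span {m}) : ℚ) = (2 : ℚ) ^ n₂)) := by
  set a : ℕ := (-n₁).toNat with hadef
  set b : ℕ := n₂.toNat with hbdef
  have haz : (a : ℤ) = -n₁ := Int.toNat_of_nonneg (by omega)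
  have hbz : (b : ℤ) = n₂ := Int.toNat_of_nonneg (by omega)
  have ha : 1 ≤ a := by omega
  have hab : a < b := by omega
  have hb : 1 ≤ b := by omega
  have hXne : (RatFunc.X : RatFunc (ZMod 2)) ≠ 0 := RatFunc.X_ne_zero
  have hXane : (Polynomial.X ^ a : (ZMod 2)[X]) ≠ 0 := pow_ne_zero a Polynomial.X_ne_zero
  -- `x` as a fraction in lowest terms
  have hxeq : x = algebraMap (ZMod 2)[X] (RatFunc (ZMod 2)) (ledrP a b)
      / algebraMap (ZMod 2)[X] (RatFunc (ZMod 2)) (Polynomial.X ^ a) := by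
    have hn1 : n₁ = -(a : ℤ) := by omega
    have hn2 : n₂ = (b : ℤ) := by omega
    rw [hx, hn1, hn2, zpow_neg, zpow_natCast, zpow_natCast, ledrP]
    simp only [map_sub, map_pow, map_add, map_one, RatFunc.algebraMap_X]
    field_simp
  have hPcopXa : IsCoprime (ledrP a b) ((Polynomial.X : (ZMod 2)[X]) ^ a) :=
    (ledrP_coprime_X a b ha).symm.pow_right
  have hnd := ledr_num_denom_of (ledrP_ne_zero a b ha) (monic_X_pow a) hPcopXa
  rw [← hxeq] at hnd
  obtain ⟨hnum, hdenom⟩ := hnd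
  have hrm0num : (x.num).rootMultiplicity 0 = 0 := by
    rw [hnum]
    refine Polynomial.rootMultiplicity_eq_zero fun h => ?_
    rw [IsRoot, ledrP_eval0 a b ha] at h
    exact one_ne_zero h
  have hrm0denom : (x.denom).rootMultiplicity 0 = a := by
    rw [hdenom]
    simpa using Polynomial.rootMultiplicity_X_sub_C_pow (0 : ZMod 2) a
  have hrm1num : (x.num).rootMultiplicity 1 = 0 := by
    rw [hnum]
    refine Polynomial.rootMultiplicity_eq_zero fun h => ?_
    rw [IsRoot, ledrP_eval1 a b hb] at h
    exact one_ne_zero h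
  have hrm1denom : (x.denom).rootMultiplicity 1 = 0 := by
    rw [hdenom]
    refine Polynomial.rootMultiplicity_eq_zero fun h => ?_
    simp [IsRoot] at h
  refine ⟨?_, ?_, ?_, ?_⟩
  · rw [hrm0num, hrm0denom]
    congr 1
    omega
  · rw [RatFunc.intDegree, hnum, hdenom, ledrP_natDegree a b hab, natDegree_X_pow]
    congr 1
    omega
  · rw [hrm1num, hrm1denom]
    simp
  · -- the fixed point count
    intro m hm
    set I : Ideal ledrS := Ideal.span {m} with hIdef
    set π : ledrS →+* ledrS ⧸ I := Ideal.Quotient.mk I with hπdef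
    set φ : (ZMod 2)[X] →+* ledrS ⧸ I := π.comp ledrψ with hφdef
    have halgP : algebraMap (ZMod 2)[X] (RatFunc (ZMod 2)) (ledrP a b)
        = x * algebraMap (ZMod 2)[X] (RatFunc (ZMod 2)) (Polynomial.X ^ a) := by
      rw [hxeq, div_mul_cancel₀]
      exact RatFunc.algebraMap_ne_zero hXane
    have hψP : ledrψ (ledrP a b) ∈ I := by
      rw [hIdef, Ideal.mem_span_singleton']
      refine ⟨⟨RatFunc.X, ledr_hXS⟩ ^ a, ?_⟩
      apply Subtype.coe_injective
      push_cast
      rw [ledrψ_coe, halgP, hm, map_pow, RatFunc.algebraMap_X]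
      ring
    have hφP : φ (ledrP a b) = 0 := Ideal.Quotient.eq_zero_iff_mem.mpr hψP
    have hφX : φ Polynomial.X = π ⟨RatFunc.X, ledr_hXS⟩ := by
      rw [hφdef, RingHom.comp_apply, ledrψ_X]
    have hφX1 : φ (1 + Polynomial.X) = π ⟨1 + RatFunc.X, ledr_hX1S⟩ := by
      rw [map_add, map_one, hφX, ← map_one π, ← map_add]
      rfl
    obtain ⟨u, v, huv⟩ := ledrP_coprime_X a b ha
    have hu : φ u * φ Polynomial.X = 1 := by
      have h := congrArg φ huv
      simpa [map_add, map_mul, map_one, hφP] using h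
    obtain ⟨u', v', huv'⟩ := ledrP_coprime_one_add_X a b hb
    have hu' : φ u' * φ (1 + Polynomial.X) = 1 := by
      have h := congrArg φ huv'
      simpa [map_add, map_mul, map_one, hφP] using h
    have hsurj : Function.Surjective φ := by
      intro zq
      obtain ⟨s, rfl⟩ := Ideal.Quotient.mk_surjective zq
      obtain ⟨y, hy⟩ := s
      induction hy using Subring.closure_induction with
      | mem z hz =>
        simp only [Set.mem_insert_iff, Set.mem_singleton_iff] at hz
        rcases hz with rfl | rfl | rfl
        · exact ⟨Polynomial.X, hφX⟩
        · refine ⟨u, ?_⟩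
          have hmul : π ⟨RatFunc.X, ledr_hXS⟩ * π ⟨RatFunc.X⁻¹, ledr_hXiS⟩ = 1 := by
            rw [← map_mul, ← map_one π]
            congr 1
            exact Subtype.ext (mul_inv_cancel₀ hXne)
          calc φ u = φ u * (π ⟨RatFunc.X, ledr_hXS⟩ * π ⟨RatFunc.X⁻¹, ledr_hXiS⟩) := by
                rw [hmul, mul_one]
            _ = (φ u * φ Polynomial.X) * π ⟨RatFunc.X⁻¹, ledr_hXiS⟩ := by
                rw [hφX]; ring
            _ = π ⟨RatFunc.X⁻¹, ledr_hXiS⟩ := by rw [hu, one_mul]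
        · refine ⟨u', ?_⟩
          have hmul : π ⟨1 + RatFunc.X, ledr_hX1S⟩ * π ⟨(1 + RatFunc.X)⁻¹, ledr_hX1iS⟩ = 1 := by
            rw [← map_mul, ← map_one π]
            congr 1
            exact Subtype.ext (mul_inv_cancel₀ ledr_one_add_X_ne_zero)
          calc φ u' = φ u' * (π ⟨1 + RatFunc.X, ledr_hX1S⟩ *
                π ⟨(1 + RatFunc.X)⁻¹, ledr_hX1iS⟩) := by rw [hmul, mul_one]
            _ = (φ u' * φ (1 + Polynomial.X)) * π ⟨(1 + RatFunc.X)⁻¹, ledr_hX1iS⟩ := by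
                rw [hφX1]; ring
            _ = π ⟨(1 + RatFunc.X)⁻¹, ledr_hX1iS⟩ := by rw [hu', one_mul]
      | zero => exact ⟨0, by rw [map_zero]; exact (map_zero π).symm⟩
      | one => exact ⟨1, by rw [map_one]; exact (map_one π).symm⟩
      | add z w hz hw ihz ihw =>
        obtain ⟨f, hf⟩ := ihz
        obtain ⟨g, hg⟩ := ihw
        exact ⟨f + g, by rw [map_add, hf, hg]; exact (map_add π _ _).symm⟩
      | neg z hz ihz =>
        obtain ⟨f, hf⟩ := ihz
        exact ⟨-f, by rw [map_neg, hf]; exact (map_neg π _).symm⟩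
      | mul z w hz hw ihz ihw =>
        obtain ⟨f, hf⟩ := ihz
        obtain ⟨g, hg⟩ := ihw
        exact ⟨f * g, by rw [map_mul, hf, hg]; exact (map_mul π _ _).symm⟩
    have hker : RingHom.ker φ = Ideal.span {ledrP a b} := by
      ext f
      constructor
      · intro hf
        have hmem : ledrψ f ∈ I := Ideal.Quotient.eq_zero_iff_mem.mp hf
        rw [hIdef, Ideal.mem_span_singleton'] at hmem
        obtain ⟨c, hc⟩ := hmem
        obtain ⟨g, i, j, hg⟩ := ledr_rep c.2
        have hc' : (c : RatFunc (ZMod 2)) * x = algebraMap (ZMod 2)[X] (RatFunc (ZMod 2)) f := by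
          have h := congrArg (Subtype.val) hc
          push_cast at h
          rwa [ledrψ_coe, hm] at h
        have key : g * ledrP a b = f * (Polynomial.X ^ (a + i) * (1 + Polynomial.X) ^ j) := by
          apply RatFunc.algebraMap_injective
          simp only [map_add, map_mul, map_pow, pow_add, map_one] at hg halgP ⊢
          linear_combination
            (-(algebraMap (ZMod 2)[X] (RatFunc (ZMod 2)) (ledrP a b))) * hg
            + ((c : RatFunc (ZMod 2)) *
                algebraMap (ZMod 2)[X] (RatFunc (ZMod 2)) Polynomial.X ^ i *
                (1 + algebraMap (ZMod 2)[X] (RatFunc (ZMod 2)) Polynomial.X) ^ j) * halgP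
            + (algebraMap (ZMod 2)[X] (RatFunc (ZMod 2)) Polynomial.X ^ a *
                algebraMap (ZMod 2)[X] (RatFunc (ZMod 2)) Polynomial.X ^ i *
                (1 + algebraMap (ZMod 2)[X] (RatFunc (ZMod 2)) Polynomial.X) ^ j) * hc'
        have hdvd : ledrP a b ∣ f * (Polynomial.X ^ (a + i) * (1 + Polynomial.X) ^ j) :=
          ⟨g, by rw [← key]; ring⟩
        have hcop : IsCoprime (ledrP a b)
            (Polynomial.X ^ (a + i) * (1 + Polynomial.X) ^ j) :=
          ((ledrP_coprime_X a b ha).symm.pow_right).mul_right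
            ((ledrP_coprime_one_add_X a b hb).symm.pow_right)
        exact Ideal.mem_span_singleton.mpr (hcop.dvd_of_dvd_mul_right hdvd)
      · intro hf
        obtain ⟨g, rfl⟩ := Ideal.mem_span_singleton.mp hf
        rw [RingHom.mem_ker, map_mul, hφP, zero_mul]
    have e := RingHom.quotientKerEquivOfSurjective hsurj
    replace e := (Ideal.quotEquivOfEq hker.symm).trans e
    have hcard : Nat.card (ledrS ⧸ I) = 2 ^ b := by
      rw [← ledr_card_quot a b ha hab]
      exact (Nat.card_congr e.toEquiv).symm
    rw [hcard]
    push_cast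
    rw [← hbz, zpow_natCast]
end

section
/- In the Ledrappier system, the number of points fixed by α^{(n,0)} equals 2^{n − 2^{ord₂(n)}} for n ≥ 1, where ord₂(n) is the 2-adic valuation of n. -/
set_option maxHeartbeats 2000000

open Polynomial nonZeroDivisors

noncomputable section LedAux

abbrev ledA := Polynomial (ZMod 2)
abbrev ledK := RatFunc (ZMod 2)

def ledS : Submonoid ledA := Submonoid.closure {Polynomial.X, 1 + Polynomial.X}

lemma led_one_add_X_ne : (1 + Polynomial.X : ledA) ≠ 0 := by
  intro h
  have := congrArg (fun p => Polynomial.coeff p 1) h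
  simp [Polynomial.coeff_one] at this

lemma ledS_le : ledS ≤ ledA⁰ := by
  rw [ledS, Submonoid.closure_le]
  rintro x (rfl | rfl) <;>
    exact mem_nonZeroDivisors_of_ne_zero (by first | exact Polynomial.X_ne_zero | exact led_one_add_X_ne)

def ledB : Subalgebra ledA ledK := Localization.subalgebra.ofField ledK ledS ledS_le

lemma mem_ledB (x : ledK) : x ∈ ledB ↔
    ∃ (a s : ledA) (_ : s ∈ ledS), x = algebraMap ledA ledK a * (algebraMap ledA ledK s)⁻¹ := by
  rw [ledB, Localization.subalgebra.ofField]
  exact Iff.rfl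

def ledM : Subring ledK :=
  Subring.closure {RatFunc.X, RatFunc.X⁻¹, ((1 : RatFunc (ZMod 2)) + RatFunc.X)⁻¹}

lemma led_poly_mem (p : ledA) : algebraMap ledA ledK p ∈ ledM := by
  induction p using Polynomial.induction_on with
  | C a =>
    rcases (show ∀ b : ZMod 2, b = 0 ∨ b = 1 by decide) a with rfl | rfl
    · simpa using Subring.zero_mem ledM
    · simpa using Subring.one_mem ledM
  | add p q hp hq => rw [map_add]; exact Subring.add_mem _ hp hq
  | monomial n a hp =>
    have : (Polynomial.C a * Polynomial.X ^ (n + 1) : ledA)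
        = Polynomial.C a * Polynomial.X ^ n * Polynomial.X := by ring
    rw [this, map_mul, RatFunc.algebraMap_X]
    exact Subring.mul_mem _ hp (Subring.subset_closure (by simp))

lemma led_inv_mem {s : ledA} (hs : s ∈ ledS) : (algebraMap ledA ledK s)⁻¹ ∈ ledM := by
  induction hs using Submonoid.closure_induction with
  | mem x hx =>
    rcases hx with rfl | rfl
    · rw [RatFunc.algebraMap_X]
      exact Subring.subset_closure (by simp)
    · rw [map_add, map_one, RatFunc.algebraMap_X]
      exact Subring.subset_closure (by simp)
  | one => simpa using Subring.one_mem ledM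
  | mul x y _ _ hx hy => rw [map_mul, mul_inv]; exact Subring.mul_mem _ hx hy

lemma ledM_eq_ledB : ledM = ledB.toSubring := by
  apply le_antisymm
  · rw [ledM, Subring.closure_le]
    rintro x (rfl | rfl | rfl)
    · show (RatFunc.X : ledK) ∈ ledB
      rw [← RatFunc.algebraMap_X (K := ZMod 2)]
      exact Subalgebra.algebraMap_mem ledB Polynomial.X
    · show (RatFunc.X : ledK)⁻¹ ∈ ledB
      rw [mem_ledB]
      refine ⟨1, Polynomial.X, Submonoid.subset_closure (by simp), ?_⟩
      rw [map_one, one_mul, RatFunc.algebraMap_X]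
    · show ((1 : ledK) + RatFunc.X)⁻¹ ∈ ledB
      rw [mem_ledB]
      refine ⟨1, 1 + Polynomial.X, Submonoid.subset_closure (by simp), ?_⟩
      rw [map_one, one_mul, map_add, map_one, RatFunc.algebraMap_X]
  · intro x hx
    rw [Subalgebra.mem_toSubring, mem_ledB] at hx
    obtain ⟨a, s, hs, rfl⟩ := hx
    exact Subring.mul_mem _ (led_poly_mem a) (led_inv_mem hs)

lemma mem_ledM_iff (y : ledK) : y ∈ ledM ↔ y ∈ ledB := by
  rw [ledM_eq_ledB, Subalgebra.mem_toSubring]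

/-- The equivalence between the closure subring and the localization subalgebra. -/
def ledEquiv : ledM ≃+* ledB where
  toFun x := ⟨x.1, (mem_ledM_iff x.1).mp x.2⟩
  invFun x := ⟨x.1, (mem_ledM_iff x.1).mpr x.2⟩
  left_inv x := rfl
  right_inv x := rfl
  map_mul' x y := rfl
  map_add' x y := rfl

end LedAux


noncomputable section LedAux2

/-- The odd part polynomial: `h = 1 + X + ... + X^{q-1}`. -/
def ledh (q : ℕ) : ledA := ∑ i ∈ Finset.range q, Polynomial.X ^ i

lemma ledh_mul (q : ℕ) : ledh q * (Polynomial.X - 1) = Polynomial.X ^ q - 1 :=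
  geom_sum_mul Polynomial.X q

lemma led_sub_one (p : ledA) : p - 1 = 1 + p := by
  rw [CharTwo.sub_eq_add, add_comm]

lemma led_Xq_ne {q : ℕ} (hq : 1 ≤ q) : (Polynomial.X ^ q - 1 : ledA) ≠ 0 := by
  have := Polynomial.X_pow_sub_C_ne_zero (R := ZMod 2) hq 1
  rwa [Polynomial.C_1] at this

lemma ledh_ne {q : ℕ} (hq : 1 ≤ q) : ledh q ≠ 0 := by
  intro h
  exact led_Xq_ne hq (by rw [← ledh_mul, h, zero_mul])

lemma ledh_natDegree {q : ℕ} (hq : 1 ≤ q) : (ledh q).natDegree = q - 1 := by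
  have h1 : (Polynomial.X - 1 : ledA) = Polynomial.X - Polynomial.C 1 := by rw [Polynomial.C_1]
  have h2 : (Polynomial.X - 1 : ledA) ≠ 0 := by
    rw [h1]; exact Polynomial.X_sub_C_ne_zero 1
  have h3 := Polynomial.natDegree_mul (ledh_ne hq) h2
  rw [ledh_mul, h1] at h3
  rw [show (Polynomial.X ^ q - 1 : ledA) = Polynomial.X ^ q - Polynomial.C 1 by
    rw [Polynomial.C_1]] at h3
  rw [Polynomial.natDegree_X_pow_sub_C, Polynomial.natDegree_X_sub_C] at h3
  omega

lemma led_coprime_X {q : ℕ} (hq : 1 ≤ q) : IsCoprime (Polynomial.X : ledA) (ledh q) := by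
  obtain ⟨r, rfl⟩ : ∃ r, q = r + 1 := ⟨q - 1, by omega⟩
  have hgs : ledh (r + 1) = Polynomial.X * (∑ i ∈ Finset.range r, Polynomial.X ^ i) + 1 :=
    geom_sum_succ
  exact ⟨-(∑ i ∈ Finset.range r, Polynomial.X ^ i), 1, by rw [hgs]; ring⟩

lemma led_coprime_one_add_X {q : ℕ} (hq : ¬ 2 ∣ q) :
    IsCoprime (1 + Polynomial.X : ledA) (ledh q) := by
  have heval : (ledh q).eval 1 = 1 := by
    rw [ledh]
    simp only [Polynomial.eval_finset_sum, Polynomial.eval_pow, Polynomial.eval_X, one_pow]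
    rw [Finset.sum_const, Finset.card_range, nsmul_eq_mul, mul_one]
    have : q % 2 = 1 := by omega
    calc (q : ZMod 2) = ((q % 2 : ℕ) : ZMod 2) := (ZMod.natCast_mod q 2).symm
    _ = 1 := by rw [this]; norm_num
  obtain ⟨c, hc⟩ := Polynomial.X_sub_C_dvd_sub_C_eval (a := (1 : ZMod 2)) (p := ledh q)
  rw [heval, Polynomial.C_1] at hc
  have hc' : ledh q = (1 + Polynomial.X) * c + 1 := by
    rw [← led_sub_one, ← hc]; ring
  exact ⟨-c, 1, by rw [hc']; ring⟩

lemma led_unit_mk {a p : ledA} (h : IsCoprime a p) :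
    IsUnit (Ideal.Quotient.mk (Ideal.span {p}) a) := by
  obtain ⟨u, v, huv⟩ := h
  apply IsUnit.of_mul_eq_one (Ideal.Quotient.mk _ u)
  rw [← map_mul, ← map_one (Ideal.Quotient.mk (Ideal.span {p})), Ideal.Quotient.eq,
    Ideal.mem_span_singleton]
  exact ⟨-v, by linear_combination huv⟩

end LedAux2

noncomputable section LedMain

instance ledB_isLocalization : IsLocalization ledS ledB :=
  Localization.subalgebra.isLocalization_ofField ledK ledS ledS_le

lemma led_card_quotient {f : ledA} (hf : f ≠ 0) :
    Nat.card (ledA ⧸ (Ideal.span {f} : Ideal ledA)) = 2 ^ f.natDegree := by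
  have key : Nat.card (AdjoinRoot f) = 2 ^ f.natDegree := by
    rw [Nat.card_congr (AdjoinRoot.powerBasis hf).basis.equivFun.toEquiv]
    simp [Nat.card_eq_fintype_card, AdjoinRoot.powerBasis_dim]
  exact key

end LedMain


/-- In the Ledrappier system, with `M = 𝔽₂[t^{±1},(1+t)^{±1}]` realized as the
subring of `𝔽₂(t)` generated by `t`, `t⁻¹` and `(1+t)⁻¹`, the number of points
fixed by `α^{(n,0)}` — the cardinality of `M/(t^n-1)M` — equals
`2^{n - 2^{ord₂ n}}` for `n ≥ 1`, where `ord₂ n` is the 2-adic valuation. -/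
theorem ledrappier_horizontal_fixed_points [Fact (Nat.Prime 2)]
    (n : ℕ) (hn : 1 ≤ n)
    (m : Subring.closure {RatFunc.X, RatFunc.X⁻¹, ((1 : RatFunc (ZMod 2)) + RatFunc.X)⁻¹})
    (hm : (m : RatFunc (ZMod 2)) = RatFunc.X ^ n - 1) :
    Nat.card
      ((Subring.closure {RatFunc.X, RatFunc.X⁻¹, ((1 : RatFunc (ZMod 2)) + RatFunc.X)⁻¹})
        ⧸ Ideal.span {m}) = 2 ^ (n - 2 ^ (padicValNat 2 n)) := by
  have hp2 : Nat.Prime 2 := Nat.prime_two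
  have hn0 : n ≠ 0 := by omega
  set k := padicValNat 2 n with hk
  have hfac : n.factorization 2 = k := Nat.factorization_def n hp2
  set e := 2 ^ k with he
  set q := n / e with hq
  have heq : e * q = n := by
    have := Nat.ordProj_mul_ordCompl_eq_self n 2
    rwa [hfac] at this
  have hqodd : ¬ 2 ∣ q := by
    have := Nat.not_dvd_ordCompl hp2 hn0
    rwa [hfac] at this
  have hq1 : 1 ≤ q := by
    have := Nat.ordCompl_pos 2 hn0
    rwa [hfac] at this
  -- the key polynomial identity
  have hXn : (Polynomial.X ^ n - 1 : ledA) = ledh q ^ e * (1 + Polynomial.X) ^ e := by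
    have h1 : (Polynomial.X ^ q - 1 : ledA) ^ e = Polynomial.X ^ n - 1 := by
      rw [he, sub_pow_char_pow, one_pow, ← pow_mul, mul_comm q, heq]
    rw [← h1, ← ledh_mul q, led_sub_one, mul_pow]
  set I : Ideal ledA := Ideal.span {ledh q ^ e} with hI
  have hcop : ∀ s ∈ ledS, IsUnit (Ideal.Quotient.mk I s) := by
    intro s hs
    induction hs using Submonoid.closure_induction with
    | mem x hx =>
      rcases hx with rfl | rfl
      · exact led_unit_mk ((led_coprime_X hq1).pow_right)
      · exact led_unit_mk ((led_coprime_one_add_X hqodd).pow_right)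
    | one => simp only [map_one]; exact isUnit_one
    | mul x y _ _ hx hy => rw [map_mul]; exact hx.mul hy
  have hg : ∀ s : ledS, IsUnit (Ideal.Quotient.mk I (s : ledA)) := fun s => hcop s s.2
  set φ : ledB →+* ledA ⧸ I := IsLocalization.lift (M := ledS) hg with hφ
  have hφ_alg : ∀ a : ledA, φ (algebraMap ledA ledB a) = Ideal.Quotient.mk I a :=
    fun a => IsLocalization.lift_eq hg a
  have hsurj : Function.Surjective φ := by
    intro z
    obtain ⟨a, rfl⟩ := Ideal.Quotient.mk_surjective z
    exact ⟨algebraMap ledA ledB a, hφ_alg a⟩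
  have hker : RingHom.ker φ = Ideal.span {algebraMap ledA ledB (ledh q ^ e)} := by
    apply le_antisymm
    · intro x hx
      rw [RingHom.mem_ker] at hx
      obtain ⟨⟨a, s⟩, rfl⟩ := IsLocalization.mk'_surjective ledS x
      have ha : Ideal.Quotient.mk I a = 0 := by
        have := (IsLocalization.lift_mk'_spec (S := ledB) hg a 0 s).mp hx
        simpa using this
      rw [Ideal.Quotient.eq_zero_iff_mem, hI, Ideal.mem_span_singleton] at ha
      obtain ⟨c, rfl⟩ := ha
      rw [Ideal.mem_span_singleton]
      exact ⟨IsLocalization.mk' ledB c s,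
        (IsLocalization.mul_mk'_eq_mk'_of_mul (S := ledB) (ledh q ^ e) c s).symm⟩
    · rw [Ideal.span_le, Set.singleton_subset_iff, SetLike.mem_coe, RingHom.mem_ker, hφ_alg,
        Ideal.Quotient.eq_zero_iff_mem, hI]
      exact Ideal.subset_span rfl
  have hoX : (1 + Polynomial.X : ledA) ∈ ledS := Submonoid.subset_closure (by simp)
  have hBunit : IsUnit (algebraMap ledA ledB (1 + Polynomial.X)) :=
    IsLocalization.map_units ledB (⟨1 + Polynomial.X, hoX⟩ : ledS)
  have hspan : Ideal.span {algebraMap ledA ledB (Polynomial.X ^ n - 1)}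
      = Ideal.span {algebraMap ledA ledB (ledh q ^ e)} := by
    have hw : algebraMap ledA ledB (Polynomial.X ^ n - 1)
        = algebraMap ledA ledB (ledh q ^ e) * (algebraMap ledA ledB (1 + Polynomial.X)) ^ e := by
      rw [← map_pow, ← map_mul, ← hXn]
    apply le_antisymm
    · rw [Ideal.span_singleton_le_span_singleton, hw]
      exact Dvd.intro _ rfl
    · rw [Ideal.span_singleton_le_span_singleton, hw, (hBunit.pow e).mul_right_dvd]
  have hm' : ledEquiv m = algebraMap ledA ledB (Polynomial.X ^ n - 1) := by
    apply Subtype.ext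
    show (m : ledK) = _
    rw [hm, Subalgebra.coe_algebraMap, map_sub, map_pow, map_one, RatFunc.algebraMap_X]
  have hIJ : Ideal.span {ledEquiv m} = RingHom.ker φ := by
    rw [hm', hspan, hker]
  have key : Nat.card
      ((Subring.closure {RatFunc.X, RatFunc.X⁻¹, ((1 : RatFunc (ZMod 2)) + RatFunc.X)⁻¹})
        ⧸ Ideal.span {m}) = Nat.card (ledA ⧸ I) := by
    apply Nat.card_congr
    refine ((Ideal.quotientEquiv (Ideal.span {m}) (Ideal.span {ledEquiv m}) ledEquiv ?_).trans
      ((Ideal.quotEquivOfEq hIJ).trans (RingHom.quotientKerEquivOfSurjective hsurj))).toEquiv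
    rw [Ideal.map_span, Set.image_singleton]
    rfl
  rw [key, hI, led_card_quotient (pow_ne_zero _ (ledh_ne hq1))]
  congr 1
  rw [Polynomial.natDegree_pow, ledh_natDegree hq1]
  have hmul : e * (q - 1) + e = e * q := by
    conv_rhs => rw [show q = q - 1 + 1 by omega]
    rw [Nat.mul_succ]
  omega
end

section
/- Let a be a root of f(x) = x⁶ − 2x⁵ − 5x⁴ − 3x³ − 5x² − 2x + 1 and b = 2a⁵ − 6a⁴ − 3a³ − 6a² − 6a. Then a and b are units in ℤ[a], and f is irreducible over ℚ. -/
open Polynomial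

lemma coe_ofNat_adjoin' (a : ℂ) (n : ℕ) [n.AtLeastTwo] :
    ((OfNat.ofNat n : Algebra.adjoin ℤ ({a} : Set ℂ)) : ℂ) = OfNat.ofNat n :=
  map_ofNat (Subalgebra.val (Algebra.adjoin ℤ ({a} : Set ℂ))) n

/-- If `e * e' = c₁ * c₂` with `c₁, c₂` irreducible in a polynomial ring over a field,
then `natDegree e ∈ {0, deg c₁, deg c₂, deg c₁ + deg c₂}`. -/
lemma natDegree_of_eq_mul_irreducible {K : Type*} [Field K] {e e' c1 c2 : K[X]}
    (hc1 : Irreducible c1) (hc2 : Irreducible c2) (h : e * e' = c1 * c2) :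
    e.natDegree = 0 ∨ e.natDegree = c1.natDegree ∨ e.natDegree = c2.natDegree ∨
      e.natDegree = c1.natDegree + c2.natDegree := by
  have hc1p : Prime c1 := hc1.prime
  have hc2p : Prime c2 := hc2.prime
  have hne : e * e' ≠ 0 := by rw [h]; exact mul_ne_zero hc1p.ne_zero hc2p.ne_zero
  have he : e ≠ 0 := left_ne_zero_of_mul hne
  have he' : e' ≠ 0 := right_ne_zero_of_mul hne
  rcases (hc1p.2.2 e e' ⟨c2, h⟩ : c1 ∣ e ∨ c1 ∣ e') with ⟨u, rfl⟩ | ⟨u, rfl⟩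
  · have hu : u ≠ 0 := by rintro rfl; simp at he
    have hcan : u * e' = c2 := by
      apply mul_left_cancel₀ hc1p.ne_zero
      rw [← mul_assoc, h]
    rcases hc2.isUnit_or_isUnit hcan.symm with hun | hun
    · right; left
      rw [natDegree_mul hc1p.ne_zero hu, natDegree_eq_zero_of_isUnit hun, add_zero]
    · right; right; right
      have h2 := natDegree_mul (mul_ne_zero hc1p.ne_zero hu) he'
      rw [h, natDegree_mul hc1p.ne_zero hc2p.ne_zero, natDegree_eq_zero_of_isUnit hun,
        add_zero] at h2
      exact h2.symm
  · have hu : u ≠ 0 := by rintro rfl; simp at he'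
    have hcan : e * u = c2 := by
      apply mul_left_cancel₀ hc1p.ne_zero
      rw [show c1 * (e * u) = e * (c1 * u) by ring, h]
    rcases hc2.isUnit_or_isUnit hcan.symm with hun | hun
    · left; exact natDegree_eq_zero_of_isUnit hun
    · right; right; left
      have h2 := congrArg natDegree hcan
      rw [natDegree_mul he hu, natDegree_eq_zero_of_isUnit hun, add_zero] at h2
      exact h2

instance : Fact (Nat.Prime 17) := ⟨by norm_num⟩
instance : Fact (Nat.Prime 7) := ⟨by norm_num⟩

lemma fZ_irreducible :
    Irreducible (X ^ 6 - 2 * X ^ 5 - 5 * X ^ 4 - 3 * X ^ 3 - 5 * X ^ 2 - 2 * X + 1 : ℤ[X]) := by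
  set F : ℤ[X] := X ^ 6 - 2 * X ^ 5 - 5 * X ^ 4 - 3 * X ^ 3 - 5 * X ^ 2 - 2 * X + 1 with hF
  have hmonic : F.Monic := by rw [hF]; monicity!
  have hdeg : F.natDegree = 6 := by rw [hF]; compute_degree!
  -- mod 17 data
  have h17 : (17 : (ZMod 17)[X]) = 0 := by
    rw [← map_ofNat (C : ZMod 17 →+* (ZMod 17)[X]) 17, show (17:ZMod 17) = 0 from by decide,
      map_zero]
  set c1 : (ZMod 17)[X] := X^3+4*X^2+6*X+16 with hc1def
  set c2 : (ZMod 17)[X] := X^3+11*X^2+13*X+16 with hc2def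
  have hc1deg : c1.natDegree = 3 := by rw [hc1def]; compute_degree!
  have hc2deg : c2.natDegree = 3 := by rw [hc2def]; compute_degree!
  have hc1monic : c1.Monic := by rw [hc1def]; monicity!
  have hc2monic : c2.Monic := by rw [hc2def]; monicity!
  have hc1irr : Irreducible c1 := by
    rw [hc1monic.irreducible_iff_roots_eq_zero_of_degree_le_three (by omega) (by omega)]
    rw [Multiset.eq_zero_iff_forall_notMem]
    intro x hx
    rw [mem_roots hc1monic.ne_zero] at hx
    have hx2 : _ := hx
    rw [hc1def] at hx2
    simp only [IsRoot, eval_add, eval_mul, eval_pow, eval_X, eval_ofNat] at hx2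
    exact (by decide : ∀ y : ZMod 17, y^3+4*y^2+6*y+16 ≠ 0) x hx2
  have hc2irr : Irreducible c2 := by
    rw [hc2monic.irreducible_iff_roots_eq_zero_of_degree_le_three (by omega) (by omega)]
    rw [Multiset.eq_zero_iff_forall_notMem]
    intro x hx
    rw [mem_roots hc2monic.ne_zero] at hx
    have hx2 : _ := hx
    rw [hc2def] at hx2
    simp only [IsRoot, eval_add, eval_mul, eval_pow, eval_X, eval_ofNat] at hx2
    exact (by decide : ∀ y : ZMod 17, y^3+11*y^2+13*y+16 ≠ 0) x hx2
  have hmap17 : F.map (Int.castRingHom (ZMod 17)) = c1 * c2 := by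
    have h0 : F.map (Int.castRingHom (ZMod 17)) =
        (X ^ 6 - 2 * X ^ 5 - 5 * X ^ 4 - 3 * X ^ 3 - 5 * X ^ 2 - 2 * X + 1 : (ZMod 17)[X]) := by
      rw [hF]; simp
    rw [h0, hc1def, hc2def]
    linear_combination (-(X^5+4*X^4+9*X^3+19*X^2+18*X+15 : (ZMod 17)[X])) * h17
  -- mod 7 data
  have h7 : (7 : (ZMod 7)[X]) = 0 := by
    rw [← map_ofNat (C : ZMod 7 →+* (ZMod 7)[X]) 7, show (7:ZMod 7) = 0 from by decide, map_zero]
  set q : (ZMod 7)[X] := X^2+4*X+1 with hqdef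
  have hqdeg : q.natDegree = 2 := by rw [hqdef]; compute_degree!
  have hqmonic : q.Monic := by rw [hqdef]; monicity!
  have hqirr : Irreducible q := by
    rw [hqmonic.irreducible_iff_roots_eq_zero_of_degree_le_three (by omega) (by omega)]
    rw [Multiset.eq_zero_iff_forall_notMem]
    intro x hx
    rw [mem_roots hqmonic.ne_zero] at hx
    have hx2 : _ := hx
    rw [hqdef] at hx2
    simp only [IsRoot, eval_add, eval_mul, eval_pow, eval_X, eval_ofNat, eval_one] at hx2
    exact (by decide : ∀ y : ZMod 7, y^2+4*y+1 ≠ 0) x hx2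
  have hmap7 : F.map (Int.castRingHom (ZMod 7)) = q ^ 3 := by
    have h0 : F.map (Int.castRingHom (ZMod 7)) =
        (X ^ 6 - 2 * X ^ 5 - 5 * X ^ 4 - 3 * X ^ 3 - 5 * X ^ 2 - 2 * X + 1 : (ZMod 7)[X]) := by
      rw [hF]; simp
    rw [h0, hqdef]
    linear_combination (-(2*X^5+8*X^4+13*X^3+8*X^2+2*X : (ZMod 7)[X])) * h7
  constructor
  · intro hu
    have := natDegree_eq_zero_of_isUnit hu
    omega
  · intro g h hgh
    by_contra hcon
    push_neg at hcon
    obtain ⟨hgu, hhu⟩ := hcon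
    have hF0 : F ≠ 0 := hmonic.ne_zero
    have hg0 : g ≠ 0 := by rintro rfl; rw [zero_mul] at hgh; exact hF0 hgh
    have hh0 : h ≠ 0 := by rintro rfl; rw [mul_zero] at hgh; exact hF0 hgh
    have hlc : g.leadingCoeff * h.leadingCoeff = 1 := by
      rw [← leadingCoeff_mul, ← hgh]; exact hmonic
    have hlcg : IsUnit g.leadingCoeff := IsUnit.of_mul_eq_one _ hlc
    have hlch : IsUnit h.leadingCoeff := IsUnit.of_mul_eq_one _ (by rw [mul_comm]; exact hlc)
    have hdsum : g.natDegree + h.natDegree = 6 := by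
      rw [← natDegree_mul hg0 hh0, ← hgh, hdeg]
    have hops : ∀ p : ℤ[X], IsUnit p.leadingCoeff → ¬ IsUnit p → p.natDegree ≠ 0 := by
      intro p hpu hnp hd
      apply hnp
      rw [eq_C_of_natDegree_eq_zero hd]
      apply isUnit_C.mpr
      have hcl : p.coeff 0 = p.leadingCoeff := by rw [leadingCoeff, hd]
      rw [hcl]; exact hpu
    have hgne : g.natDegree ≠ 0 := hops g hlcg hgu
    have hhne : h.natDegree ≠ 0 := hops h hlch hhu
    -- mod 17
    have hgcast17 : (Int.castRingHom (ZMod 17)) g.leadingCoeff ≠ 0 := by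
      rcases Int.isUnit_iff.mp hlcg with h1 | h1 <;> rw [h1] <;> decide
    have hdeq17 : (g.map (Int.castRingHom (ZMod 17))).natDegree = g.natDegree :=
      natDegree_map_of_leadingCoeff_ne_zero _ hgcast17
    have hmul17 : g.map (Int.castRingHom (ZMod 17)) * h.map (Int.castRingHom (ZMod 17))
        = c1 * c2 := by rw [← Polynomial.map_mul, ← hgh, hmap17]
    have h17deg := natDegree_of_eq_mul_irreducible hc1irr hc2irr hmul17
    rw [hdeq17, hc1deg, hc2deg] at h17deg
    -- mod 7
    have hgcast7 : (Int.castRingHom (ZMod 7)) g.leadingCoeff ≠ 0 := by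
      rcases Int.isUnit_iff.mp hlcg with h1 | h1 <;> rw [h1] <;> decide
    have hdeq7 : (g.map (Int.castRingHom (ZMod 7))).natDegree = g.natDegree :=
      natDegree_map_of_leadingCoeff_ne_zero _ hgcast7
    have hmul7 : g.map (Int.castRingHom (ZMod 7)) * h.map (Int.castRingHom (ZMod 7)) = q ^ 3 := by
      rw [← Polynomial.map_mul, ← hgh, hmap7]
    have hdvd7 : g.map (Int.castRingHom (ZMod 7)) ∣ q ^ 3 := Dvd.intro _ hmul7
    obtain ⟨i, hi3, u, hu⟩ := (dvd_prime_pow hqirr.prime 3).mp hdvd7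
    have hmg0 : g.map (Int.castRingHom (ZMod 7)) ≠ 0 := by
      intro h0
      rw [h0, zero_mul] at hu
      exact (pow_ne_zero i hqmonic.ne_zero) hu.symm
    have hgi : g.natDegree = i * 2 := by
      have h1 := congrArg natDegree hu
      rw [natDegree_mul hmg0 (Units.ne_zero u), natDegree_eq_zero_of_isUnit u.isUnit, add_zero,
        natDegree_pow, hqdeg, hdeq7] at h1
      exact h1
    omega

open Polynomial in
/-- Let `a` be a (complex) root of `f(x) = x⁶-2x⁵-5x⁴-3x³-5x²-2x+1` and
`b = 2a⁵-6a⁴-3a³-6a²-6a`. Then `a` and `b` are units in `ℤ[a]`, and `f` is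
irreducible over `ℚ`. -/
theorem units_in_order_and_irreducible (a : ℂ)
    (ha : a ^ 6 - 2 * a ^ 5 - 5 * a ^ 4 - 3 * a ^ 3 - 5 * a ^ 2 - 2 * a + 1 = 0) :
    (∀ x : Algebra.adjoin ℤ ({a} : Set ℂ), (x : ℂ) = a → IsUnit x) ∧
    (∀ x : Algebra.adjoin ℤ ({a} : Set ℂ),
      (x : ℂ) = 2 * a ^ 5 - 6 * a ^ 4 - 3 * a ^ 3 - 6 * a ^ 2 - 6 * a → IsUnit x) ∧
    Irreducible (X ^ 6 - 2 * X ^ 5 - 5 * X ^ 4 - 3 * X ^ 3 - 5 * X ^ 2 - 2 * X + 1 : ℚ[X]) := by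
  have hAmem : a ∈ Algebra.adjoin ℤ ({a} : Set ℂ) := Algebra.subset_adjoin rfl
  set A : Algebra.adjoin ℤ ({a} : Set ℂ) := ⟨a, hAmem⟩ with hA
  have hAa : (A : ℂ) = a := rfl
  have hc2 := coe_ofNat_adjoin' a 2
  have hc3 := coe_ofNat_adjoin' a 3
  have hc5 := coe_ofNat_adjoin' a 5
  have hc6 := coe_ofNat_adjoin' a 6
  have hc7 := coe_ofNat_adjoin' a 7
  have hc14 := coe_ofNat_adjoin' a 14
  have hc22 := coe_ofNat_adjoin' a 22
  refine ⟨?_, ?_, ?_⟩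
  · intro x hx
    have hxA : x = A := Subtype.ext hx
    subst hxA
    refine IsUnit.of_mul_eq_one (a := A) (-A^5+2*A^4+5*A^3+3*A^2+5*A+2) (Subtype.ext ?_)
    push_cast [hc2, hc3, hc5]
    linear_combination -ha
  · intro x hx
    have hxA : x = 2*A^5-6*A^4-3*A^3-6*A^2-6*A := by
      refine Subtype.ext ?_
      rw [hx]
      push_cast [hc2, hc3, hc6]
      ring
    rw [hxA]
    refine IsUnit.of_mul_eq_one (-5*A^5+14*A^4+14*A^3+3*A^2+22*A-7) (Subtype.ext ?_)
    push_cast [hc2, hc3, hc5, hc6, hc7, hc14, hc22]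
    linear_combination (-10*a^4+38*a^3-15*a^2+40*a-1) * ha
  · have h1 := fZ_irreducible
    have hmonic : (X ^ 6 - 2*X^5 - 5*X^4 - 3*X^3 - 5*X^2 - 2*X + 1 : ℤ[X]).Monic := by
      monicity!
    have h2 := (IsPrimitive.Int.irreducible_iff_irreducible_map_cast hmonic.isPrimitive).mp h1
    have h3 : (X ^ 6 - 2*X^5 - 5*X^4 - 3*X^3 - 5*X^2 - 2*X + 1 : ℤ[X]).map (Int.castRingHom ℚ)
        = (X ^ 6 - 2 * X ^ 5 - 5 * X ^ 4 - 3 * X ^ 3 - 5 * X ^ 2 - 2 * X + 1 : ℚ[X]) := by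
      simp
    rwa [h3] at h2
end

section
/- Let σ range over the four field embeddings of ℚ(√2,√3) into ℝ. There exists a unit vector v = (v₁,v₂) ∈ ℝ² (namely v = (0,1)) such that |1+√2|^{v₁}|2+√3|^{v₂} · |1+√2|^{v₁}|2−√3|^{v₂} = 1 while for every embedding σ, |σ(1+√2)|^{v₁}|σ(2+√3)|^{v₂} ≠ 1. -/
/-- There is a unit vector `v = (0,1) ∈ ℝ²` such that
`|1+√2|^{v₁}|2+√3|^{v₂} · |1+√2|^{v₁}|2-√3|^{v₂} = 1`, while for every real
embedding `σ` of `ℚ(√2,√3)` (parametrized by the sign choices `σ(√2) = ±√2`,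
`σ(√3) = ±√3`, i.e. by reals `s₂, s₃` with `s₂² = 2`, `s₃² = 3`) one has
`|σ(1+√2)|^{v₁}|σ(2+√3)|^{v₂} ≠ 1`. (Real exponents denote `Real.rpow`.) -/
theorem crossing_without_variety_direction :
    ∃ v : ℝ × ℝ, v = (0, 1) ∧ v.1 ^ 2 + v.2 ^ 2 = 1 ∧
      (|1 + Real.sqrt 2| ^ v.1 * |2 + Real.sqrt 3| ^ v.2) *
        (|1 + Real.sqrt 2| ^ v.1 * |2 - Real.sqrt 3| ^ v.2) = 1 ∧
      ∀ s₂ s₃ : ℝ, s₂ ^ 2 = 2 → s₃ ^ 2 = 3 →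
        |1 + s₂| ^ v.1 * |2 + s₃| ^ v.2 ≠ 1 := by
  refine ⟨(0, 1), rfl, by norm_num, ?_, ?_⟩
  · have h3 : Real.sqrt 3 ^ 2 = 3 := Real.sq_sqrt (by norm_num)
    simp only [Real.rpow_zero, Real.rpow_one, one_mul]
    rw [← abs_mul]
    have : (2 + Real.sqrt 3) * (2 - Real.sqrt 3) = 1 := by nlinarith
    rw [this, abs_one]
  · intro s₂ s₃ h2 h3 h
    simp only [Real.rpow_zero, Real.rpow_one, one_mul] at h
    have := sq_abs (2 + s₃)
    rw [h] at this
    nlinarith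
end
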